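/- arXiv:1810.04015 — 7 statements merged into one kernel-verified Lean document; each statement's English description precedes it below -/
import Mathlib

section
/- Let F be a field and n a positive integer such that the characteristic of F is zero or does not divide n. Then all irreducible factors of the n-th cyclotomic polynomial Φ_n(X) in F[X] have the same degree; that is, if f and g are monic irreducible polynomials over F each dividing Φ_n(X), then deg f = deg g. -/
/-!
Since `n` is invertible in `F`, every root of `Φ_n` in an algebraic closure is a primitive `n`-th
root of unity, so an irreducible factor of `Φ_n` is, up to a scalar, the minimal polynomial of some
primitive root `ζ` and has degree `[F(ζ) : F]`. Two primitive `n`-th roots of unity are powers of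
each other, hence generate the same field.
-/

open Polynomial IntermediateField

theorem neZero_natCast_of_ringChar {F : Type*} [Field F] {n : ℕ} (hn : 0 < n)
    (hchar : ringChar F = 0 ∨ ¬ ringChar F ∣ n) : NeZero (n : F) := by
  refine ⟨fun h => ?_⟩
  rw [ringChar.spec] at h
  rcases hchar with h0 | hndvd
  · rw [h0, zero_dvd_iff] at h
    omega
  · exact hndvd h

theorem Polynomial.Irreducible.natDegree_eq_finrank_adjoin {F K : Type*} [Field F] [Field K]
    [Algebra F K] {f : F[X]} (hf : Irreducible f) {z : K} (hz : aeval z f = 0) :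
    f.natDegree = Module.finrank F F⟮z⟯ := by
  have hz_int : IsIntegral F z := IsAlgebraic.isIntegral ⟨f, hf.ne_zero, hz⟩
  rw [adjoin.finrank hz_int, ← minpoly.eq_of_irreducible hf hz,
    natDegree_mul_C (inv_ne_zero (leadingCoeff_ne_zero.mpr hf.ne_zero))]

theorem IsPrimitiveRoot.adjoin_simple_eq (F : Type*) {K : Type*} [Field F] [Field K] [Algebra F K]
    {n : ℕ} [NeZero n] {z w : K} (hz : IsPrimitiveRoot z n) (hw : IsPrimitiveRoot w n) :
    F⟮z⟯ = F⟮w⟯ := by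
  obtain ⟨i, -, hi⟩ := hz.eq_pow_of_pow_eq_one hw.pow_eq_one
  obtain ⟨j, -, hj⟩ := hw.eq_pow_of_pow_eq_one hz.pow_eq_one
  apply le_antisymm <;> rw [adjoin_simple_le_iff]
  · exact hj ▸ pow_mem (mem_adjoin_simple_self F w) j
  · exact hi ▸ pow_mem (mem_adjoin_simple_self F z) i

theorem Polynomial.isPrimitiveRoot_of_dvd_cyclotomic {F K : Type*} [Field F] [Field K]
    [Algebra F K] {n : ℕ} [NeZero (n : K)] {f : F[X]} (hfd : f ∣ cyclotomic n F) {z : K}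
    (hz : aeval z f = 0) : IsPrimitiveRoot z n := by
  rw [← isRoot_cyclotomic_iff, ← map_cyclotomic n (algebraMap F K), IsRoot, eval_map,
    ← aeval_def]
  exact aeval_eq_zero_of_dvd_aeval_eq_zero hfd hz

theorem stmt_0_general (F : Type) [Field F] (n : ℕ) (hn : 0 < n)
    (hchar : ringChar F = 0 ∨ ¬ (ringChar F ∣ n))
    (f g : Polynomial F) (hfi : Irreducible f)
    (hfd : f ∣ Polynomial.cyclotomic n F)
    (hgi : Irreducible g) (hgd : g ∣ Polynomial.cyclotomic n F) :
    f.natDegree = g.natDegree := by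
  let K := AlgebraicClosure F
  have : NeZero n := ⟨hn.ne'⟩
  have : NeZero (n : F) := neZero_natCast_of_ringChar hn hchar
  have : NeZero (n : K) := NeZero.of_faithfulSMul F K n
  obtain ⟨z, hz⟩ := IsAlgClosed.exists_aeval_eq_zero K f (degree_pos_of_irreducible hfi).ne'
  obtain ⟨w, hw⟩ := IsAlgClosed.exists_aeval_eq_zero K g (degree_pos_of_irreducible hgi).ne'
  rw [hfi.natDegree_eq_finrank_adjoin hz, hgi.natDegree_eq_finrank_adjoin hw,
    (isPrimitiveRoot_of_dvd_cyclotomic hfd hz).adjoin_simple_eq F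
      (isPrimitiveRoot_of_dvd_cyclotomic hgd hw)]

theorem stmt_0 (F : Type) [Field F] (n : ℕ) (hn : 0 < n)
    (hchar : ringChar F = 0 ∨ ¬ (ringChar F ∣ n))
    (f g : Polynomial F) (hf : f.Monic) (hfi : Irreducible f)
    (hfd : f ∣ Polynomial.cyclotomic n F)
    (hg : g.Monic) (hgi : Irreducible g) (hgd : g ∣ Polynomial.cyclotomic n F) :
    f.natDegree = g.natDegree :=
  stmt_0_general F n hn hchar f g hfi hfd hgi hgd
end

section
/- Let F be a field and n a positive integer such that the characteristic of F is zero or does not divide n. Let ζ and ζ' be two primitive n-th roots of unity in an algebraic closure of F. Then for every natural number a coprime to n: the minimal polynomial of ζ^a over F equals the minimal polynomial of ζ over F if and only if the minimal polynomial of ζ'^a over F equals the minimal polynomial of ζ' over F. (Hence the set of exponents {a mod n : minpoly_F(ζ^a) = minpoly_F(ζ)} is independent of the choice of primitive n-th root of unity ζ.) -/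
/-
Every root of unity ξ of order dividing n is a power ζ^k of ζ. If minpoly(ζ^a) = minpoly(ζ), normality
gives an automorphism σ with σ ζ = ζ^a, and then σ ξ = (ζ^a)^k = ξ^a, so ξ^a is conjugate to ξ.
-/

theorem IsPrimitiveRoot.minpoly_pow_eq_of_pow_eq_one {F L : Type*} [Field F] [Field L]
    [Algebra F L] [Normal F L] {n : ℕ} [NeZero n] {ζ ξ : L} (hζ : IsPrimitiveRoot ζ n)
    (hξ : ξ ^ n = 1) {a : ℕ} (h : minpoly F (ζ ^ a) = minpoly F ζ) :
    minpoly F (ξ ^ a) = minpoly F ξ := by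
  obtain ⟨k, -, rfl⟩ := hζ.eq_pow_of_pow_eq_one hξ
  obtain ⟨σ, hσ⟩ := IsConjRoot.exists_algEquiv (isConjRoot_def.mpr h)
  have hσξ : σ (ζ ^ k) = (ζ ^ k) ^ a := by
    rw [map_pow, hσ, ← pow_mul, ← pow_mul, mul_comm]
  rw [← hσξ, minpoly.algEquiv_eq]

theorem stmt_1_general (F : Type) [Field F] (n : ℕ) (hn : 0 < n)
    (ζ ζ' : AlgebraicClosure F)
    (hζ : IsPrimitiveRoot ζ n) (hζ' : IsPrimitiveRoot ζ' n)
    (a : ℕ) :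
    minpoly F (ζ ^ a) = minpoly F ζ ↔ minpoly F (ζ' ^ a) = minpoly F ζ' := by
  have : NeZero n := ⟨hn.ne'⟩
  exact ⟨hζ.minpoly_pow_eq_of_pow_eq_one hζ'.pow_eq_one,
    hζ'.minpoly_pow_eq_of_pow_eq_one hζ.pow_eq_one⟩

theorem stmt_1 (F : Type) [Field F] (n : ℕ) (hn : 0 < n)
    (hchar : ringChar F = 0 ∨ ¬ (ringChar F ∣ n))
    (ζ ζ' : AlgebraicClosure F)
    (hζ : IsPrimitiveRoot ζ n) (hζ' : IsPrimitiveRoot ζ' n)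
    (a : ℕ) (ha : Nat.Coprime a n) :
    minpoly F (ζ ^ a) = minpoly F ζ ↔ minpoly F (ζ' ^ a) = minpoly F ζ' :=
  stmt_1_general F n hn ζ ζ' hζ hζ' a
end

section
/- Let G be a finite group and F a field of characteristic 0. Define x ∼_F y for x, y ∈ G if and only if tr(ρ(x)) = tr(ρ(y)) for every finite-dimensional F-representation (ρ, V) of G. Then ∼_F is an equivalence relation on G, and the number of its equivalence classes (the F-conjugacy classes of G) equals the number of isomorphism classes of simple modules over the group algebra F[G]. -/
/-- `F`-conjugacy: `x ∼_F y` iff every finite-dimensional `F`-representation of `G`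
has equal character values at `x` and `y`. -/
def FConjRel (F : Type) [Field F] (G : Type) [Group G] (x y : G) : Prop :=
  ∀ (V : Type) [AddCommGroup V] [Module F V] [FiniteDimensional F V]
    (ρ : Representation F G V),
    LinearMap.trace F V (ρ x) = LinearMap.trace F V (ρ y)

namespace BCount

open LinearMap

attribute [local instance] Classical.propDecidable

variable {F : Type} [Field F] {G : Type} [Group G]

/-- Action of an algebra element as an `F`-linear endomorphism. -/
noncomputable def actLin (M : Type) [AddCommGroup M] [Module F M] [Module (MonoidAlgebra F G) M]
    [IsScalarTower F (MonoidAlgebra F G) M] (a : MonoidAlgebra F G) : M →ₗ[F] M where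
  toFun x := a • x
  map_add' := smul_add a
  map_smul' c x := by
    simp only [RingHom.id_apply]
    rw [← algebraMap_smul (MonoidAlgebra F G) c x, smul_smul, ← Algebra.commutes, mul_smul,
      algebraMap_smul]

@[simp] lemma actLin_apply (M : Type) [AddCommGroup M] [Module F M]
    [Module (MonoidAlgebra F G) M] [IsScalarTower F (MonoidAlgebra F G) M]
    (a : MonoidAlgebra F G) (x : M) : actLin M a x = a • x := rfl

/-- Character of a module, as a function on the group. -/
noncomputable def charFn (M : Type) [AddCommGroup M] [Module F M]
    [Module (MonoidAlgebra F G) M] [IsScalarTower F (MonoidAlgebra F G) M] : G → F :=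
  fun g => trace F M (actLin M (MonoidAlgebra.of F G g))

/-- Character of a module, extended linearly to the monoid algebra. -/
noncomputable def charLin (M : Type) [AddCommGroup M] [Module F M]
    [Module (MonoidAlgebra F G) M] [IsScalarTower F (MonoidAlgebra F G) M] :
    MonoidAlgebra F G →ₗ[F] F where
  toFun a := trace F M (actLin M a)
  map_add' a b := by
    have h : actLin (F := F) (G := G) M (a + b) = actLin M a + actLin M b := by
      ext x; simp [add_smul]
    show trace F M (actLin M (a + b)) = trace F M (actLin M a) + trace F M (actLin M b)
    rw [h, map_add]
  map_smul' c a := by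
    simp only [RingHom.id_apply]
    have h : actLin (F := F) (G := G) M (c • a) = c • actLin M a := by
      ext x; simp [smul_assoc]
    show trace F M (actLin M (c • a)) = c • trace F M (actLin M a)
    rw [h, map_smul]

lemma charFn_congr {M N : Type} [AddCommGroup M] [Module F M] [Module (MonoidAlgebra F G) M]
    [IsScalarTower F (MonoidAlgebra F G) M] [AddCommGroup N] [Module F N]
    [Module (MonoidAlgebra F G) N] [IsScalarTower F (MonoidAlgebra F G) N]
    (e : M ≃ₗ[MonoidAlgebra F G] N) :
    charFn (F := F) (G := G) M = charFn (F := F) (G := G) N := by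
  funext g
  show trace F M (actLin M (MonoidAlgebra.of F G g)) = trace F N (actLin N (MonoidAlgebra.of F G g))
  have h : actLin N (MonoidAlgebra.of F G g)
      = (e.restrictScalars F).conj (actLin M (MonoidAlgebra.of F G g)) := by
    ext x
    simp [LinearEquiv.conj_apply]
  rw [h, trace_conj']

omit [Group G] in
lemma finiteFA [Monoid G] [Fintype G] : Module.Finite F (MonoidAlgebra F G) :=
  Module.Finite.of_basis (MonoidAlgebra.basis G F)

lemma finite_of_isSimpleModule (M : Type) [AddCommGroup M] [Module (MonoidAlgebra F G) M]
    [IsSimpleModule (MonoidAlgebra F G) M] : Module.Finite (MonoidAlgebra F G) M := by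
  haveI := IsSimpleModule.nontrivial (MonoidAlgebra F G) M
  obtain ⟨x, hx⟩ := exists_ne (0 : M)
  refine ⟨⟨{x}, ?_⟩⟩
  simp only [Finset.coe_singleton]
  rcases eq_bot_or_eq_top (Submodule.span (MonoidAlgebra F G) {x}) with h | h
  · exact absurd (Submodule.span_singleton_eq_bot.mp h) hx
  · exact h

/-- The type of isomorphism classes of simple `F[G]`-modules. -/
abbrev Cls (F : Type) [Field F] (G : Type) [Group G] :=
  Quot (fun M N : {M : ModuleCat.{0} (MonoidAlgebra F G) //
      IsSimpleModule (MonoidAlgebra F G) M} => Nonempty (M.1 ≅ N.1))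

lemma isoRel_equivalence :
    Equivalence (fun M N : {M : ModuleCat.{0} (MonoidAlgebra F G) //
        IsSimpleModule (MonoidAlgebra F G) M} => Nonempty (M.1 ≅ N.1)) :=
  ⟨fun _ => ⟨CategoryTheory.Iso.refl _⟩, fun ⟨e⟩ => ⟨e.symm⟩, fun ⟨e⟩ ⟨f⟩ => ⟨e.trans f⟩⟩

/-- A representative of an isomorphism class. -/
noncomputable def rep (i : Cls F G) : ModuleCat.{0} (MonoidAlgebra F G) := i.out.1

instance (i : Cls F G) : IsSimpleModule (MonoidAlgebra F G) (rep i) := i.out.2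

/-- The character of (the representative of) an isomorphism class. -/
noncomputable def chi (i : Cls F G) : G → F :=
  letI := Module.compHom (rep i) (algebraMap F (MonoidAlgebra F G))
  haveI : IsScalarTower F (MonoidAlgebra F G) (rep i) := .of_algebraMap_smul fun _ _ => rfl
  charFn (rep i)

/-- The linearly extended character of an isomorphism class. -/
noncomputable def chiLin (i : Cls F G) : MonoidAlgebra F G →ₗ[F] F :=
  letI := Module.compHom (rep i) (algebraMap F (MonoidAlgebra F G))
  haveI : IsScalarTower F (MonoidAlgebra F G) (rep i) := .of_algebraMap_smul fun _ _ => rfl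
  charLin (rep i)

lemma chiLin_of (i : Cls F G) (g : G) : chiLin i (MonoidAlgebra.of F G g) = chi i g := rfl

/-- The `F`-dimension of the representative of a class. -/
noncomputable def repRank (i : Cls F G) : ℕ :=
  letI := Module.compHom (rep i) (algebraMap F (MonoidAlgebra F G))
  Module.finrank F (rep i)

variable (F G) in
/-- The class of a simple module. -/
noncomputable def cls (M : Type) [AddCommGroup M] [Module (MonoidAlgebra F G) M]
    [IsSimpleModule (MonoidAlgebra F G) M] : Cls F G :=
  Quot.mk _ ⟨ModuleCat.of (MonoidAlgebra F G) M, ‹IsSimpleModule (MonoidAlgebra F G) M›⟩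

lemma cls_spec (M : Type) [AddCommGroup M] [Module (MonoidAlgebra F G) M]
    [IsSimpleModule (MonoidAlgebra F G) M] :
    Nonempty ((rep (cls F G M)) ≃ₗ[MonoidAlgebra F G] M) := by
  have h : Quot.mk _ (cls F G M).out = Quot.mk _
      (⟨ModuleCat.of (MonoidAlgebra F G) M, ‹IsSimpleModule (MonoidAlgebra F G) M›⟩ :
        {M : ModuleCat.{0} (MonoidAlgebra F G) // IsSimpleModule (MonoidAlgebra F G) M}) :=
    (Quot.out_eq _)
  obtain ⟨e⟩ := isoRel_equivalence.eqvGen_iff.mp (Quot.eqvGen_exact h)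
  exact ⟨e.toLinearEquiv⟩

lemma cls_congr {M N : Type} [AddCommGroup M] [Module (MonoidAlgebra F G) M]
    [IsSimpleModule (MonoidAlgebra F G) M] [AddCommGroup N] [Module (MonoidAlgebra F G) N]
    [IsSimpleModule (MonoidAlgebra F G) N] (e : M ≃ₗ[MonoidAlgebra F G] N) :
    cls F G M = cls F G N :=
  Quot.sound ⟨e.toModuleIso⟩

lemma cls_rep (i : Cls F G) : cls F G (rep i) = i := by
  refine Eq.trans (Quot.sound ?_) (Quot.out_eq i)
  exact ⟨(LinearEquiv.refl (MonoidAlgebra F G) (rep i)).toModuleIso⟩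

lemma cls_eq_of_hom {M N : Type} [AddCommGroup M] [Module (MonoidAlgebra F G) M]
    [IsSimpleModule (MonoidAlgebra F G) M] [AddCommGroup N] [Module (MonoidAlgebra F G) N]
    [IsSimpleModule (MonoidAlgebra F G) N] (ψ : M →ₗ[MonoidAlgebra F G] N) (hψ : ψ ≠ 0) :
    cls F G M = cls F G N := by
  have hker : LinearMap.ker ψ = ⊥ := by
    rcases eq_bot_or_eq_top (LinearMap.ker ψ) with h | h
    · exact h
    · exact absurd (LinearMap.ker_eq_top.mp h) hψ
  have hrange : LinearMap.range ψ = ⊤ := by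
    rcases eq_bot_or_eq_top (LinearMap.range ψ) with h | h
    · exact absurd (LinearMap.range_eq_bot.mp h) hψ
    · exact h
  exact cls_congr (LinearEquiv.ofBijective ψ
    ⟨LinearMap.ker_eq_bot.mp hker, LinearMap.range_eq_top.mp hrange⟩)

lemma charFn_simple (M : Type) [AddCommGroup M] [Module F M] [Module (MonoidAlgebra F G) M]
    [IsScalarTower F (MonoidAlgebra F G) M] [IsSimpleModule (MonoidAlgebra F G) M] :
    charFn (F := F) (G := G) M = chi (cls F G M) := by
  obtain ⟨e⟩ := cls_spec (F := F) (G := G) M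
  letI := Module.compHom (rep (cls F G M)) (algebraMap F (MonoidAlgebra F G))
  haveI : IsScalarTower F (MonoidAlgebra F G) (rep (cls F G M)) := .of_algebraMap_smul fun _ _ => rfl
  exact (charFn_congr e).symm

lemma exists_decomp (M : Type) [AddCommGroup M] [Module F M] [Module (MonoidAlgebra F G) M]
    [IsScalarTower F (MonoidAlgebra F G) M] [FiniteDimensional F M]
    [IsSemisimpleModule (MonoidAlgebra F G) M] :
    ∃ s : Finset (Submodule (MonoidAlgebra F G) M),
      (∀ w ∈ s, IsSimpleModule (MonoidAlgebra F G) w) ∧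
      (⨆ w ∈ s, (w : Submodule (MonoidAlgebra F G) M)) = ⊤ ∧
      DirectSum.IsInternal
        (fun w : s => ((w : Submodule (MonoidAlgebra F G) M)).restrictScalars F) := by
  classical
  obtain ⟨S, indep, Stop, hsimp⟩ :=
    IsSemisimpleModule.exists_sSupIndep_sSup_simples_eq_top (MonoidAlgebra F G) M
  have hindepA : iSupIndep (fun w : S => (w : Submodule (MonoidAlgebra F G) M)) :=
    (sSupIndep_iff S).mp indep
  have hFindep : iSupIndep
      (fun w : S => ((w : Submodule (MonoidAlgebra F G) M)).restrictScalars F) := by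
    intro w
    rw [Submodule.disjoint_def]
    intro x hxw hxrest
    have hle : (⨆ (w' : S) (_ : w' ≠ w),
          ((w' : Submodule (MonoidAlgebra F G) M)).restrictScalars F)
        ≤ ((⨆ (w' : S) (_ : w' ≠ w), (w' : Submodule (MonoidAlgebra F G) M)) :
            Submodule (MonoidAlgebra F G) M).restrictScalars F := by
      refine iSup₂_le fun w' hne => ?_
      intro y hy
      exact Submodule.mem_iSup_of_mem w' (Submodule.mem_iSup_of_mem hne hy)
    have := (hindepA w).le_bot ⟨hxw, hle hxrest⟩
    simpa using this
  have hFtop : (⨆ w : S, ((w : Submodule (MonoidAlgebra F G) M)).restrictScalars F) = ⊤ := by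
    rw [eq_top_iff]
    intro x _
    have hx : x ∈ sSup S := by rw [Stop]; trivial
    rw [sSup_eq_iSup'] at hx
    refine Submodule.iSup_induction'
      (p := fun w : S => (w : Submodule (MonoidAlgebra F G) M))
      (motive := fun y _ => y ∈
        ⨆ w : S, ((w : Submodule (MonoidAlgebra F G) M)).restrictScalars F)
      (fun w y hy => Submodule.mem_iSup_of_mem w hy) (Submodule.zero_mem _)
      (fun y z _ _ hy hz => Submodule.add_mem _ hy hz) hx
  have hfin : S.Finite := by
    have h1 : {w : S |
        ((w : Submodule (MonoidAlgebra F G) M)).restrictScalars F ≠ ⊥}.Finite :=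
      Submodule.finite_ne_bot_of_iSupIndep hFindep
    have h2 : {w : S |
        ((w : Submodule (MonoidAlgebra F G) M)).restrictScalars F ≠ ⊥} = Set.univ := by
      refine Set.eq_univ_of_forall fun w => ?_
      haveI := hsimp w.1 w.2
      haveI := IsSimpleModule.nontrivial (MonoidAlgebra F G)
        (w : Submodule (MonoidAlgebra F G) M)
      simp only [Set.mem_setOf_eq, Ne, Submodule.restrictScalars_eq_bot_iff]
      exact Submodule.nontrivial_iff_ne_bot.mp ‹_›
    rw [h2] at h1
    have : Finite S := Set.finite_univ_iff.mp h1
    exact Set.toFinite S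
  refine ⟨hfin.toFinset, ?_, ?_, ?_⟩
  · intro w hw
    exact hsimp w (hfin.mem_toFinset.mp hw)
  · rw [eq_top_iff, ← Stop]
    refine sSup_le fun w hw => ?_
    exact le_iSup₂ (f := fun (w : Submodule (MonoidAlgebra F G) M) (_ : w ∈ hfin.toFinset) => w)
      w (hfin.mem_toFinset.mpr hw)
  · have hfam : (fun w : hfin.toFinset =>
          ((w : Submodule (MonoidAlgebra F G) M)).restrictScalars F)
        = (fun w : S => ((w : Submodule (MonoidAlgebra F G) M)).restrictScalars F)
          ∘ (Equiv.subtypeEquivRight (fun x => hfin.mem_toFinset)) := by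
      funext w
      rfl
    refine DirectSum.isInternal_submodule_of_iSupIndep_of_iSup_eq_top ?_ ?_
    · rw [hfam]
      exact hFindep.comp (Equiv.subtypeEquivRight (fun x => hfin.mem_toFinset)).injective
    · rw [hfam, ← hFtop]
      exact (Equiv.subtypeEquivRight (fun x => hfin.mem_toFinset)).iSup_comp
        (g := fun w : S => ((w : Submodule (MonoidAlgebra F G) M)).restrictScalars F)

lemma charFn_eq_sum (M : Type) [AddCommGroup M] [Module F M] [Module (MonoidAlgebra F G) M]
    [IsScalarTower F (MonoidAlgebra F G) M] [FiniteDimensional F M]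
    {s : Finset (Submodule (MonoidAlgebra F G) M)}
    (hint : DirectSum.IsInternal
      (fun w : s => ((w : Submodule (MonoidAlgebra F G) M)).restrictScalars F)) (g : G) :
    charFn (F := F) (G := G) M g
      = ∑ w : s, charFn (F := F) (G := G) (w : Submodule (MonoidAlgebra F G) M) g := by
  have hmap : ∀ w : s, Set.MapsTo (actLin M (MonoidAlgebra.of F G g))
      (((w : Submodule (MonoidAlgebra F G) M)).restrictScalars F : Set M)
      (((w : Submodule (MonoidAlgebra F G) M)).restrictScalars F : Set M) := by
    intro w x hx
    exact (w : Submodule (MonoidAlgebra F G) M).smul_mem _ hx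
  rw [show charFn (F := F) (G := G) M g = trace F M (actLin M (MonoidAlgebra.of F G g)) from rfl,
    trace_eq_sum_trace_restrict hint hmap]
  exact Finset.sum_congr rfl fun w _ => rfl

theorem char_decomp [Fintype G] [NeZero (Fintype.card G : F)]
    (V : Type) [AddCommGroup V] [Module F V] [FiniteDimensional F V]
    (ρ : Representation F G V) :
    ∃ (n : ℕ) (f : Fin n → Cls F G), ∀ g, trace F V (ρ g) = ∑ t, chi (f t) g := by
  letI : Module (MonoidAlgebra F G) V := Module.compHom V ρ.asAlgebraHom.toRingHom
  haveI : IsScalarTower F (MonoidAlgebra F G) V := ⟨fun c a v => by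
    show ρ.asAlgebraHom (c • a) v = c • ρ.asAlgebraHom a v
    rw [map_smul]; rfl⟩
  haveI : NeZero (Nat.card G : F) := by rw [Nat.card_eq_fintype_card]; infer_instance
  haveI : IsSemisimpleModule (MonoidAlgebra F G) V := inferInstance
  obtain ⟨s, hsimp, -, hint⟩ := exists_decomp (F := F) (G := G) V
  have hact : ∀ g : G, actLin V (MonoidAlgebra.of F G g) = ρ g := by
    intro g
    ext v
    show ρ.asAlgebraHom (MonoidAlgebra.of F G g) v = ρ g v
    rw [MonoidAlgebra.of_apply, Representation.asAlgebraHom_single_one]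
  refine ⟨s.card, fun t => @cls F _ G _
      ((s.equivFin.symm t : Submodule (MonoidAlgebra F G) V)) _ _
      (hsimp _ (s.equivFin.symm t).2), fun g => ?_⟩
  calc trace F V (ρ g) = charFn (F := F) (G := G) V g := by
        rw [show charFn (F := F) (G := G) V g
          = trace F V (actLin V (MonoidAlgebra.of F G g)) from rfl, hact]
    _ = ∑ w : s, charFn (F := F) (G := G) (w : Submodule (MonoidAlgebra F G) V) g :=
        charFn_eq_sum V hint g
    _ = ∑ w : s, chi (@cls F _ G _
          ((w : Submodule (MonoidAlgebra F G) V)) _ _ (hsimp _ w.2)) g := by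
        refine Finset.sum_congr rfl fun w _ => ?_
        have h := @charFn_simple F _ G _ ((w : Submodule (MonoidAlgebra F G) V)) _ _ _ _
          (hsimp _ w.2)
        rw [congrFun h g]
    _ = _ := by
        rw [← Equiv.sum_comp s.equivFin.symm
          (fun w : s => chi (@cls F _ G _
            ((w : Submodule (MonoidAlgebra F G) V)) _ _ (hsimp _ w.2)) g)]

lemma actLin_one (M : Type) [AddCommGroup M] [Module F M] [Module (MonoidAlgebra F G) M]
    [IsScalarTower F (MonoidAlgebra F G) M] :
    actLin M (1 : MonoidAlgebra F G) = LinearMap.id := by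
  ext x; simp

lemma actLin_mul (M : Type) [AddCommGroup M] [Module F M] [Module (MonoidAlgebra F G) M]
    [IsScalarTower F (MonoidAlgebra F G) M] (a b : MonoidAlgebra F G) :
    actLin M (a * b) = actLin M a ∘ₗ actLin M b := by
  ext x; simp [mul_smul]

lemma finiteF_of_simple [Fintype G] (M : Type) [AddCommGroup M] [Module F M]
    [Module (MonoidAlgebra F G) M] [IsScalarTower F (MonoidAlgebra F G) M]
    [IsSimpleModule (MonoidAlgebra F G) M] : FiniteDimensional F M := by
  haveI := finite_of_isSimpleModule (F := F) (G := G) M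
  haveI := finiteFA (F := F) (G := G)
  exact Module.Finite.trans (MonoidAlgebra F G) M

lemma chi_mul [Fintype G] [NeZero (Fintype.card G : F)] (i j : Cls F G) :
    ∃ (n : ℕ) (f : Fin n → Cls F G), ∀ g, chi i g * chi j g = ∑ t, chi (f t) g := by
  letI := Module.compHom (rep i) (algebraMap F (MonoidAlgebra F G))
  haveI : IsScalarTower F (MonoidAlgebra F G) (rep i) := .of_algebraMap_smul fun _ _ => rfl
  letI := Module.compHom (rep j) (algebraMap F (MonoidAlgebra F G))
  haveI : IsScalarTower F (MonoidAlgebra F G) (rep j) := .of_algebraMap_smul fun _ _ => rfl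
  haveI : FiniteDimensional F (rep i) := finiteF_of_simple (G := G) (rep i)
  haveI : FiniteDimensional F (rep j) := finiteF_of_simple (G := G) (rep j)
  let ρ : Representation F G (TensorProduct F (rep i) (rep j)) := {
    toFun := fun g => TensorProduct.map (actLin (rep i) (MonoidAlgebra.of F G g))
      (actLin (rep j) (MonoidAlgebra.of F G g))
    map_one' := by
      rw [map_one, actLin_one, actLin_one, TensorProduct.map_id]
      rfl
    map_mul' := fun g h => by
      rw [map_mul, actLin_mul, actLin_mul, TensorProduct.map_comp]
      rfl }
  obtain ⟨n, f, h⟩ := char_decomp (TensorProduct F (rep i) (rep j)) ρ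
  refine ⟨n, f, fun g => ?_⟩
  rw [← h g]
  exact (trace_tensorProduct' _ _).symm

lemma chi_one [Fintype G] [NeZero (Fintype.card G : F)] :
    ∃ (n : ℕ) (f : Fin n → Cls F G), ∀ g, (1 : F) = ∑ t, chi (f t) g := by
  obtain ⟨n, f, h⟩ := char_decomp (F := F) F (Representation.trivial F (G := G) (V := F))
  refine ⟨n, f, fun g => ?_⟩
  rw [← h g]
  have ht : (Representation.trivial F (G := G) (V := F)) g = LinearMap.id := rfl
  rw [ht, trace_id, Module.finrank_self, Nat.cast_one]

theorem cls_finite [Fintype G] [NeZero (Fintype.card G : F)] : Finite (Cls F G) := by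
  haveI := finiteFA (F := F) (G := G)
  haveI : NeZero (Nat.card G : F) := by rw [Nat.card_eq_fintype_card]; infer_instance
  obtain ⟨s, hsimp, htop, -⟩ := exists_decomp (F := F) (G := G) (MonoidAlgebra F G)
  refine Finite.of_surjective (fun w : s =>
    @cls F _ G _ ((w : Submodule (MonoidAlgebra F G) (MonoidAlgebra F G))) _ _
      (hsimp _ w.2)) ?_
  intro i
  haveI := IsSimpleModule.nontrivial (MonoidAlgebra F G) (rep i)
  obtain ⟨x, hx⟩ := exists_ne (0 : rep i)
  let φ : MonoidAlgebra F G →ₗ[MonoidAlgebra F G] (rep i) :=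
    LinearMap.toSpanSingleton _ _ x
  have hone : φ 1 = x := by simp [φ]
  have hex : ∃ w : s, ¬ ((w : Submodule (MonoidAlgebra F G) (MonoidAlgebra F G)) ≤ ker φ) := by
    by_contra h
    push_neg at h
    have htle : (⊤ : Submodule (MonoidAlgebra F G) (MonoidAlgebra F G)) ≤ ker φ := by
      rw [← htop]
      exact iSup₂_le fun w hw => h ⟨w, hw⟩
    have : φ 1 = 0 := htle trivial
    rw [hone] at this
    exact hx this
  obtain ⟨w, hw⟩ := hex
  haveI := hsimp _ w.2
  have hψ : φ.comp ((w : Submodule (MonoidAlgebra F G) (MonoidAlgebra F G))).subtype ≠ 0 := by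
    intro h0
    apply hw
    intro y hy
    rw [mem_ker]
    have := DFunLike.congr_fun h0 ⟨y, hy⟩
    simpa using this
  exact ⟨w, (cls_eq_of_hom _ hψ).trans (cls_rep i)⟩

lemma key_action [Fintype G]
    {s : Finset (Submodule (MonoidAlgebra F G) (MonoidAlgebra F G))}
    (hsimp : ∀ w ∈ s, IsSimpleModule (MonoidAlgebra F G) w)
    (d : s →₀ MonoidAlgebra F G)
    (hdmem : ∀ w : s, d w ∈ (w : Submodule (MonoidAlgebra F G) (MonoidAlgebra F G)))
    (hdsum : (d.sum fun _ a => a) = 1)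
    (N : Type) [AddCommGroup N] [Module (MonoidAlgebra F G) N]
    [IsSimpleModule (MonoidAlgebra F G) N] (c : Cls F G) (x : N) :
    (∑ w ∈ Finset.univ.filter (fun w : s =>
        @cls F _ G _ ((w : Submodule (MonoidAlgebra F G) (MonoidAlgebra F G))) _ _
          (hsimp _ w.2) = c), d w) • x
      = if cls F G N = c then x else 0 := by
  let φ : MonoidAlgebra F G →ₗ[MonoidAlgebra F G] N := LinearMap.toSpanSingleton _ _ x
  have hker : ∀ w : s,
      @cls F _ G _ ((w : Submodule (MonoidAlgebra F G) (MonoidAlgebra F G))) _ _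
        (hsimp _ w.2) ≠ cls F G N →
      ∀ a ∈ (w : Submodule (MonoidAlgebra F G) (MonoidAlgebra F G)), φ a = 0 := by
    intro w hne a ha
    by_contra h0
    haveI := hsimp _ w.2
    have hψ : φ.comp ((w : Submodule (MonoidAlgebra F G) (MonoidAlgebra F G))).subtype ≠ 0 := by
      intro h
      have := DFunLike.congr_fun h ⟨a, ha⟩
      simp only [LinearMap.comp_apply, Submodule.coe_subtype, LinearMap.zero_apply] at this
      exact h0 this
    exact hne (cls_eq_of_hom _ hψ)
  have hsum_all : ∑ w : s, φ (d w) = x := by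
    rw [← map_sum]
    have : (∑ w : s, d w) = 1 := by
      rw [← hdsum, Finsupp.sum_fintype]
      intro w; rfl
    rw [this]
    simp [φ]
  have hEc : (∑ w ∈ Finset.univ.filter (fun w : s =>
        @cls F _ G _ ((w : Submodule (MonoidAlgebra F G) (MonoidAlgebra F G))) _ _
          (hsimp _ w.2) = c), d w) • x
      = ∑ w ∈ Finset.univ.filter (fun w : s =>
        @cls F _ G _ ((w : Submodule (MonoidAlgebra F G) (MonoidAlgebra F G))) _ _
          (hsimp _ w.2) = c), φ (d w) := by
    rw [Finset.sum_smul]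
    rfl
  by_cases hc : cls F G N = c
  · rw [if_pos hc, hEc, ← hsum_all]
    apply Finset.sum_subset (Finset.subset_univ _)
    intro w _ hwnot
    rw [Finset.mem_filter] at hwnot
    push_neg at hwnot
    have hne := hwnot (Finset.mem_univ w)
    rw [← hc] at hne
    exact hker w hne (d w) (hdmem w)
  · rw [if_neg hc, hEc]
    apply Finset.sum_eq_zero
    intro w hwmem
    rw [Finset.mem_filter] at hwmem
    have : @cls F _ G _ ((w : Submodule (MonoidAlgebra F G) (MonoidAlgebra F G))) _ _
        (hsimp _ w.2) ≠ cls F G N := by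
      rw [hwmem.2]
      exact fun h => hc h.symm
    exact hker w this (d w) (hdmem w)

theorem chi_linearIndependent [Fintype G] [NeZero (Fintype.card G : F)] [CharZero F]
    [Fintype (Cls F G)] : LinearIndependent F (chi (F := F) (G := G)) := by
  haveI := finiteFA (F := F) (G := G)
  haveI : NeZero (Nat.card G : F) := by rw [Nat.card_eq_fintype_card]; infer_instance
  rw [Fintype.linearIndependent_iff]
  intro cf hsum i0
  obtain ⟨s, hsimp, htop, -⟩ := exists_decomp (F := F) (G := G) (MonoidAlgebra F G)
  have h1 : (1 : MonoidAlgebra F G) ∈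
      ⨆ w : s, (w : Submodule (MonoidAlgebra F G) (MonoidAlgebra F G)) := by
    rw [iSup_subtype]
    rw [htop]
    trivial
  rw [Submodule.mem_iSup_iff_exists_finsupp] at h1
  obtain ⟨d, hdmem, hdsum⟩ := h1
  -- the idempotent-like elements
  set E : Cls F G → MonoidAlgebra F G := fun c =>
    ∑ w ∈ Finset.univ.filter (fun w : s =>
        @cls F _ G _ ((w : Submodule (MonoidAlgebra F G) (MonoidAlgebra F G))) _ _
          (hsimp _ w.2) = c), d w with hE
  -- the linear functional
  set Λ : MonoidAlgebra F G →ₗ[F] F := ∑ i, cf i • chiLin i with hΛ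
  have hΛ0 : Λ = 0 := by
    apply MonoidAlgebra.lhom_ext'
    intro x
    apply LinearMap.ext_ring
    show Λ (MonoidAlgebra.of F G x) = 0
    rw [hΛ, LinearMap.sum_apply]
    have := congrFun hsum x
    simp only [Finset.sum_apply, Pi.smul_apply, smul_eq_mul, Pi.zero_apply] at this
    simpa [← chiLin_of] using this
  have hEval : ∀ i : Cls F G, chiLin i (E i0) = if i = i0 then
      ((repRank (F := F) (G := G) i : F)) else 0 := by
    intro i
    letI := Module.compHom (rep i) (algebraMap F (MonoidAlgebra F G))
    haveI : IsScalarTower F (MonoidAlgebra F G) (rep i) := .of_algebraMap_smul fun _ _ => rfl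
    haveI : FiniteDimensional F (rep i) := finiteF_of_simple (G := G) (rep i)
    have hAct : actLin (rep i) (E i0) = if i = i0 then LinearMap.id else (0 : Module.End F (rep i)) := by
      ext x
      have hk := key_action hsimp d hdmem hdsum (rep i) i0 x
      rw [cls_rep] at hk
      rw [actLin_apply, ← hE] at *
      rw [hk]
      split <;> simp
    show trace F (rep i) (actLin (rep i) (E i0)) = _
    rw [hAct]
    split
    · rw [trace_id]
      rfl
    · rw [map_zero]
  have hzero : Λ (E i0) = 0 := by rw [hΛ0]; rfl
  rw [hΛ, LinearMap.sum_apply] at hzero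
  simp only [LinearMap.smul_apply, smul_eq_mul] at hzero
  have hfin : ∑ i, cf i * (if i = i0 then ((repRank (F := F) (G := G) i : F)) else 0) = 0 :=
    (Finset.sum_congr rfl fun i _ => by rw [hEval i]).trans hzero
  rw [Finset.sum_congr rfl (fun i _ => mul_ite (i = i0) (cf i) ((repRank (F := F) (G := G) i : F)) 0)] at hfin
  simp only [mul_zero] at hfin
  rw [Finset.sum_ite_eq' Finset.univ i0
    (fun i => cf i * (repRank (F := F) (G := G) i : F))] at hfin
  simp only [Finset.mem_univ, if_true] at hfin
  haveI := IsSimpleModule.nontrivial (MonoidAlgebra F G) (rep i0)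
  letI := Module.compHom (rep i0) (algebraMap F (MonoidAlgebra F G))
  haveI : IsScalarTower F (MonoidAlgebra F G) (rep i0) := .of_algebraMap_smul fun _ _ => rfl
  haveI : FiniteDimensional F (rep i0) := finiteF_of_simple (G := G) (rep i0)
  have hpos : (0 : ℕ) < repRank (F := F) (G := G) i0 := by
    have : repRank (F := F) (G := G) i0 = Module.finrank F (rep i0) := rfl
    rw [this]
    exact Module.finrank_pos
  rcases mul_eq_zero.mp hfin with h | h
  · exact h
  · exact absurd h (Nat.cast_ne_zero.mpr hpos.ne')

/-- The tautological representation attached to a module. -/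
noncomputable def actRep (M : Type) [AddCommGroup M] [Module F M] [Module (MonoidAlgebra F G) M]
    [IsScalarTower F (MonoidAlgebra F G) M] : Representation F G M where
  toFun g := actLin M (MonoidAlgebra.of F G g)
  map_one' := by rw [map_one, actLin_one]; rfl
  map_mul' g h := by rw [map_mul, actLin_mul]; rfl

omit [Group G] in
lemma span_eq_top_of_separating {Q : Type*} [Fintype Q] (W : Submodule F (Q → F))
    (h1 : (1 : Q → F) ∈ W) (hmul : ∀ f g, f ∈ W → g ∈ W → f * g ∈ W)
    (hsep : ∀ q q' : Q, q ≠ q' → ∃ f ∈ W, f q ≠ f q') : W = ⊤ := by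
  classical
  have hind : ∀ q : Q, (fun q' => if q' = q then (1 : F) else 0) ∈ W := by
    intro q
    have hpt : ∀ q' : Q, q' ≠ q → ∃ g ∈ W, g q = 1 ∧ g q' = 0 := by
      intro q' hq'
      obtain ⟨f, hfW, hf⟩ := hsep q q' (Ne.symm hq')
      refine ⟨(f q - f q')⁻¹ • (f - (f q') • 1), ?_, ?_, ?_⟩
      · exact W.smul_mem _ (W.sub_mem hfW (W.smul_mem _ h1))
      · show (f q - f q')⁻¹ * (f q - f q' * 1) = 1
        rw [mul_one]
        exact inv_mul_cancel₀ (sub_ne_zero.mpr hf)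
      · show (f q - f q')⁻¹ * (f q' - f q' * 1) = 0
        rw [mul_one, sub_self, mul_zero]
    choose gf hgW hgq hgq' using hpt
    let g' : Q → (Q → F) := fun q' => if h : q' = q then 1 else gf q' h
    have hprodW : (∏ q' ∈ Finset.univ.erase q, g' q') ∈ W := by
      refine Finset.prod_induction g' (· ∈ W) hmul h1 ?_
      intro q' hq'
      have hne : q' ≠ q := Finset.ne_of_mem_erase hq'
      rw [show g' q' = gf q' hne by simp [g', hne]]
      exact hgW q' hne
    have heq : (fun q' => if q' = q then (1 : F) else 0)
        = ∏ q' ∈ Finset.univ.erase q, g' q' := by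
      funext q''
      rw [Finset.prod_apply]
      by_cases h : q'' = q
      · subst h
        rw [if_pos rfl]
        refine (Finset.prod_eq_one fun q' hq' => ?_).symm
        have hne : q' ≠ q'' := Finset.ne_of_mem_erase hq'
        rw [show g' q' = gf q' hne by simp [g', hne]]
        exact hgq q' hne
      · rw [if_neg h]
        refine (Finset.prod_eq_zero (Finset.mem_erase.mpr ⟨h, Finset.mem_univ _⟩) ?_).symm
        rw [show g' q'' = gf q'' h by simp [g', h]]
        exact hgq' q'' h
    rw [heq]
    exact hprodW
  rw [eq_top_iff]
  intro f _
  have hf : f = ∑ q : Q, f q • (fun q' => if q' = q then (1 : F) else 0) := by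
    funext q'
    rw [Finset.sum_apply]
    simp only [Pi.smul_apply, smul_eq_mul, mul_ite, mul_one, mul_zero]
    simp [Finset.sum_ite_eq]
  rw [hf]
  exact Submodule.sum_mem _ fun q _ => W.smul_mem _ (hind q)

end BCount

open BCount in
set_option maxHeartbeats 1000000 in
theorem stmt_3 (F : Type) [Field F] (hchar : ringChar F = 0)
    (G : Type) [Group G] [Fintype G] :
    Equivalence (FConjRel F G) ∧
      Nat.card (Quot (FConjRel F G)) =
        Nat.card (Quot (fun M N : {M : ModuleCat.{0} (MonoidAlgebra F G) //
            IsSimpleModule (MonoidAlgebra F G) M} => Nonempty (M.1 ≅ N.1))) := by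
  classical
  haveI : CharP F 0 := ringChar.of_eq hchar
  haveI : CharZero F := CharP.charP_to_charZero F
  haveI : NeZero (Fintype.card G : F) := ⟨Nat.cast_ne_zero.mpr Fintype.card_ne_zero⟩
  refine ⟨⟨fun x V _ _ _ ρ => rfl, ?_, ?_⟩, ?_⟩
  · intro x y h V _ _ _ ρ
    exact (h V ρ).symm
  · intro x y z h1 h2 V _ _ _ ρ
    exact (h1 V ρ).trans (h2 V ρ)
  haveI : Finite (Cls F G) := cls_finite
  haveI : Fintype (Cls F G) := Fintype.ofFinite _
  set Φ : G → (Cls F G → F) := fun x i => chi i x with hΦdef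
  have hPhi : ∀ x y, FConjRel F G x y ↔ Φ x = Φ y := by
    intro x y
    constructor
    · intro h
      funext i
      letI := Module.compHom (rep i) (algebraMap F (MonoidAlgebra F G))
      haveI : IsScalarTower F (MonoidAlgebra F G) (rep i) := .of_algebraMap_smul fun _ _ => rfl
      haveI : FiniteDimensional F (rep i) := finiteF_of_simple (G := G) (rep i)
      exact h (rep i) (actRep (rep i))
    · intro h V _ _ _ ρ
      obtain ⟨n, f, hf⟩ := char_decomp V ρ
      rw [hf x, hf y]
      refine Finset.sum_congr rfl fun t _ => ?_
      exact congrFun h (f t)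
  have e1 : Quot (FConjRel F G) ≃ Set.range Φ :=
    (Quot.congrRight hPhi).trans (Setoid.quotientKerEquivRange Φ)
  rw [Nat.card_congr e1]
  show Nat.card (Set.range Φ) = Nat.card (Cls F G)
  haveI : Fintype (Set.range Φ) := Set.fintypeRange Φ
  rw [Nat.card_eq_fintype_card, Nat.card_eq_fintype_card]
  set c : Cls F G → (Set.range Φ → F) := fun i t => t.1 i with hc
  have hmem_of : ∀ (nn : ℕ) (f : Fin nn → Cls F G) (u : Set.range Φ → F),
      (∀ x : G, u ⟨Φ x, ⟨x, rfl⟩⟩ = ∑ t, chi (f t) x) →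
      u ∈ Submodule.span F (Set.range c) := by
    intro nn f u hu
    have hueq : u = ∑ t, c (f t) := by
      funext t
      obtain ⟨x, hx⟩ := t.2
      have ht : t = ⟨Φ x, ⟨x, rfl⟩⟩ := Subtype.ext hx.symm
      rw [ht, hu x, Finset.sum_apply]
    rw [hueq]
    exact Submodule.sum_mem _ fun t _ => Submodule.subset_span ⟨f t, rfl⟩
  have h1W : (1 : Set.range Φ → F) ∈ Submodule.span F (Set.range c) := by
    obtain ⟨nn, f, h⟩ := chi_one (F := F) (G := G)
    exact hmem_of nn f 1 (fun x => by rw [← h x]; rfl)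
  have hmulW : ∀ u v, u ∈ Submodule.span F (Set.range c) →
      v ∈ Submodule.span F (Set.range c) → u * v ∈ Submodule.span F (Set.range c) := by
    intro u v hu hv
    have hWW : Submodule.span F (Set.range c) * Submodule.span F (Set.range c)
        ≤ Submodule.span F (Set.range c) := by
      rw [Submodule.span_mul_span]
      refine Submodule.span_le.mpr ?_
      rintro _ ⟨u1, hu1, v1, hv1, rfl⟩
      obtain ⟨i, rfl⟩ := hu1
      obtain ⟨j, rfl⟩ := hv1
      obtain ⟨nn, f, h⟩ := chi_mul (F := F) (G := G) i j
      exact hmem_of nn f _ (fun x => by rw [← h x]; rfl)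
    exact hWW (Submodule.mul_mem_mul hu hv)
  have hsepW : ∀ q q' : Set.range Φ, q ≠ q' →
      ∃ f ∈ Submodule.span F (Set.range c), f q ≠ f q' := by
    intro q q' hne
    have hne1 : q.1 ≠ q'.1 := fun h => hne (Subtype.ext h)
    obtain ⟨i, hi⟩ := Function.ne_iff.mp hne1
    exact ⟨c i, Submodule.subset_span ⟨i, rfl⟩, hi⟩
  have hWtop : Submodule.span F (Set.range c) = ⊤ :=
    span_eq_top_of_separating (F := F) (Q := ↥(Set.range Φ))
      (Submodule.span F (Set.range c)) h1W hmulW hsepW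
  apply le_antisymm
  · have h1 : Fintype.card (Set.range Φ) = Module.finrank F (Set.range Φ → F) :=
      (Module.finrank_pi F).symm
    have h2 : Module.finrank F (Set.range Φ → F)
        = Module.finrank F (Submodule.span F (Set.range c)) := by
      rw [hWtop]
      exact (finrank_top F _).symm
    have h3 : Module.finrank F (Submodule.span F (Set.range c))
        ≤ (Set.range c).toFinset.card := finrank_span_le_card _
    have h4 : (Set.range c).toFinset.card ≤ Fintype.card (Cls F G) := by
      rw [Set.toFinset_range]
      exact Finset.card_image_le.trans (le_of_eq Finset.card_univ)
    omega
  · have hli : LinearIndependent F c := by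
      rw [Fintype.linearIndependent_iff]
      intro a ha i
      have hfun : ∀ x : G, ∑ j, a j * chi j x = 0 := by
        intro x
        have := congrFun ha ⟨Φ x, ⟨x, rfl⟩⟩
        simpa [hc, Finset.sum_apply] using this
      have hzero : ∑ j, a j • chi (F := F) (G := G) j = 0 := by
        funext x
        simpa [Finset.sum_apply] using hfun x
      have hLI := chi_linearIndependent (F := F) (G := G)
      rw [Fintype.linearIndependent_iff] at hLI
      exact hLI a hzero i
    have hcard := hli.fintype_card_le_finrank
    rwa [Module.finrank_pi] at hcard
end

section
/- Let G be a finite group, H a normal subgroup of G of index p, where p is prime. Let (η, W) be an irreducible complex representation of H such that for every g ∈ G the conjugate representation η^g is isomorphic to η. Then the number of isomorphism classes of irreducible complex representations ρ of G whose restriction to H is isomorphic to η is exactly p; i.e., η extends to exactly p pairwise non-isomorphic irreducible complex representations of G. -/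
/-!
Choose `g₀ ∈ G` whose image generates `G ⧸ H ≃ ℤ/p`. Invariance of `η` under conjugation by `g₀`
gives an invertible `A` with `A η(g₀⁻¹ h g₀) = η(h) A`. By Schur's lemma `A ^ p η(g₀ ^ p)⁻¹` is a
nonzero scalar; dividing `A` by a `p`-th root of that scalar gives `A ^ p = η(g₀ ^ p)`, and then
`h g₀ ^ n ↦ η(h) A ^ n` is a well-defined extension `τ` of `η` to `G`.

If `σ` is any extension, transport it to the space of `τ`: for each `x`, `τ(x)⁻¹ σ(x)` commutes
with `η(H)` because `H` is normal, so it is a scalar `χ(x)`, and `χ` is a character of `G` trivial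
on `H`, i.e. `σ ≅ χ ⊗ τ`. Conversely an isomorphism `χ ⊗ τ ≅ χ' ⊗ τ` is a scalar on the simple
restriction to `H`, which forces `χ = χ'`. So the extensions correspond to the `p` characters of
`G ⧸ H`.
-/

open CategoryTheory

/-- Conjugation by `g` as a monoid homomorphism `H →* H`, for `H` a normal subgroup:
`h ↦ g⁻¹ h g`. -/
def conjIntoHom {G : Type} [Group G] (H : Subgroup G) (hN : H.Normal) (g : G) :
    ↥H →* ↥H where
  toFun h := ⟨g⁻¹ * ↑h * g, by simpa using hN.conj_mem _ h.2 g⁻¹⟩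
  map_one' := by ext; simp
  map_mul' a b := by ext; simp; group

theorem Subgroup.exists_pow_mem_iff_dvd_of_index_eq_prime {G : Type*} [Group G]
    {H : Subgroup G} [H.Normal] {p : ℕ} [hp : Fact p.Prime] (hidx : H.index = p) :
    ∃ g₀ : G, (∀ j : ℕ, g₀ ^ j ∈ H ↔ p ∣ j) ∧ ∀ x : G, ∃ n : ℕ, x * (g₀ ^ n)⁻¹ ∈ H := by
  have hcard : Nat.card (G ⧸ H) = p := H.index_eq_card ▸ hidx
  have : Finite (G ⧸ H) := Nat.finite_of_card_ne_zero (hcard ▸ hp.out.ne_zero)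
  have : Nontrivial (G ⧸ H) := Finite.one_lt_card_iff_nontrivial.mp (hcard ▸ hp.out.one_lt)
  obtain ⟨a, ha⟩ := exists_ne (1 : G ⧸ H)
  obtain ⟨g₀, rfl⟩ := QuotientGroup.mk_surjective a
  have hord : orderOf (g₀ : G ⧸ H) = p := orderOf_eq_prime (hcard ▸ pow_card_eq_one') ha
  refine ⟨g₀, fun j => ?_, fun x => ?_⟩
  · rw [← hord, orderOf_dvd_iff_pow_eq_one, ← QuotientGroup.mk_pow, QuotientGroup.eq_one_iff]
  · obtain ⟨n, hn⟩ : (x : G ⧸ H) ∈ Submonoid.powers (g₀ : G ⧸ H) :=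
      mem_powers_iff_mem_zpowers.mpr (zpowers_eq_top_of_prime_card hcard ha ▸ Subgroup.mem_top _)
    refine ⟨n, ?_⟩
    rw [← QuotientGroup.eq_one_iff, QuotientGroup.mk_mul, QuotientGroup.mk_inv,
      QuotientGroup.mk_pow, ← hn, mul_inv_cancel]

theorem Subgroup.card_monoidHom_le_ker {G M : Type*} [Group G] [CommMonoid M] (H : Subgroup G)
    [H.Normal] [Finite (G ⧸ H)] [IsCyclic (G ⧸ H)] [HasEnoughRootsOfUnity M (Nat.card (G ⧸ H))] :
    Nat.card {χ : G →* Mˣ // H ≤ χ.ker} = Nat.card (G ⧸ H) := by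
  let := IsCyclic.commGroup (α := G ⧸ H)
  obtain ⟨e⟩ := IsCyclic.monoidHom_equiv_self (G ⧸ H) M
  rw [← Nat.card_congr e.toEquiv, ← Nat.card_congr (MonoidHom.liftOfSurjective _
    (QuotientGroup.mk'_surjective H)), QuotientGroup.ker_mk']

theorem commute_map_inv_mul_map {G M : Type*} [Group G] [Monoid M] {H : Subgroup G} [H.Normal]
    {ρ τ : G →* M} (hρτ : ∀ h ∈ H, ρ h = τ h) (x : G) {h : G} (hh : h ∈ H) :
    Commute (τ x⁻¹ * ρ x) (τ h) := by
  have hconj : x * h * x⁻¹ ∈ H := Subgroup.Normal.conj_mem inferInstance h hh x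
  calc τ x⁻¹ * ρ x * τ h = τ x⁻¹ * (ρ (x * h * x⁻¹) * ρ x) := by
        rw [← hρτ h hh, mul_assoc, ← map_mul, ← map_mul]; group
    _ = τ h * (τ x⁻¹ * ρ x) := by
        rw [hρτ _ hconj, ← mul_assoc, ← mul_assoc, ← map_mul, ← map_mul]; group

section Extension

variable {G : Type} [Group G] {H : Subgroup G} (hN : H.Normal)

theorem conjIntoHom_mul_apply (a b : G) (y : H) :
    conjIntoHom H hN (a * b) y = conjIntoHom H hN b (conjIntoHom H hN a y) :=
  Subtype.ext (by simp [conjIntoHom, mul_assoc])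

theorem conjIntoHom_apply_inv_apply (g : G) (y : H) :
    conjIntoHom H hN g (conjIntoHom H hN g⁻¹ y) = y :=
  Subtype.ext (by simp [conjIntoHom, mul_assoc])

variable {M : Type*} [Monoid M] {η : H →* M} {g₀ : G} {S : M}

theorem pow_mul_map_conjIntoHom_pow (hS : ∀ y, S * η (conjIntoHom H hN g₀ y) = η y * S)
    (n : ℕ) (y : H) : S ^ n * η (conjIntoHom H hN (g₀ ^ n) y) = η y * S ^ n := by
  induction n generalizing y with
  | zero => simp [conjIntoHom]
  | succ n ih =>
    rw [pow_succ, pow_succ, conjIntoHom_mul_apply, mul_assoc, hS, ← mul_assoc, ih, mul_assoc]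

theorem map_mul_pow_eq_of_mul_inv_pow_mem (hSpow : ∀ j (hj : g₀ ^ j ∈ H), S ^ j = η ⟨g₀ ^ j, hj⟩)
    {x : G} {k₁ k₂ : ℕ} (h₁ : x * (g₀ ^ k₁)⁻¹ ∈ H) (h₂ : x * (g₀ ^ k₂)⁻¹ ∈ H) :
    η ⟨_, h₁⟩ * S ^ k₁ = η ⟨_, h₂⟩ * S ^ k₂ := by
  wlog hk : k₁ ≤ k₂ generalizing k₁ k₂
  · exact (this h₂ h₁ (le_of_not_ge hk)).symm
  obtain ⟨j, rfl⟩ := Nat.exists_eq_add_of_le' hk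
  have hj : g₀ ^ j ∈ H := by
    convert H.mul_mem (H.inv_mem h₂) h₁ using 1
    rw [pow_add]; group
  rw [pow_add S j k₁, hSpow j hj, ← mul_assoc, ← map_mul]
  congr 2
  ext
  simp only [Subgroup.coe_mul, pow_add]
  group

theorem exists_monoidHom_extension (hS : ∀ y, S * η (conjIntoHom H hN g₀ y) = η y * S) {p : ℕ}
    (hord : ∀ j : ℕ, g₀ ^ j ∈ H ↔ p ∣ j) (hgen : ∀ x : G, ∃ n : ℕ, x * (g₀ ^ n)⁻¹ ∈ H)
    (hSp : S ^ p = η ⟨g₀ ^ p, (hord p).2 dvd_rfl⟩) :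
    ∃ ρ : G →* M, ∀ y : H, ρ y = η y := by
  have hSpow : ∀ j (hj : g₀ ^ j ∈ H), S ^ j = η ⟨g₀ ^ j, hj⟩ := by
    intro j hj
    obtain ⟨m, rfl⟩ := (hord j).1 hj
    rw [pow_mul, hSp, ← map_pow]
    congr 1
    ext
    simp [pow_mul]
  choose n hn using hgen
  have hρ : ∀ x m (hm : x * (g₀ ^ m)⁻¹ ∈ H), η ⟨_, hn x⟩ * S ^ n x = η ⟨_, hm⟩ * S ^ m :=
    fun x m hm => map_mul_pow_eq_of_mul_inv_pow_mem hSpow (hn x) hm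
  refine ⟨{ toFun := fun x => η ⟨_, hn x⟩ * S ^ n x, map_one' := ?_, map_mul' := fun x y => ?_ },
    fun y => ?_⟩
  · simp only [hρ 1 0 (by simp), pow_zero, inv_one, mul_one]
    exact map_one η
  · set b := conjIntoHom H hN (g₀ ^ n x)⁻¹ ⟨_, hn y⟩
    have hb : S ^ n x * η ⟨_, hn y⟩ = η b * S ^ n x := by
      simpa only [b, conjIntoHom_apply_inv_apply] using pow_mul_map_conjIntoHom_pow hN hS (n x) b
    have hab : ((⟨_, hn x⟩ * b : H) : G) = x * y * (g₀ ^ (n x + n y))⁻¹ := by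
      simp only [b, conjIntoHom, inv_inv, MonoidHom.coe_mk, OneHom.coe_mk, Subgroup.coe_mul,
        pow_add]
      group
    calc η ⟨_, hn (x * y)⟩ * S ^ n (x * y) = η (⟨_, hn x⟩ * b) * S ^ (n x + n y) := by
          rw [hρ _ _ (hab ▸ ((⟨_, hn x⟩ : H) * b).2)]
          congr 2
          exact Subtype.ext hab.symm
      _ = η ⟨_, hn x⟩ * S ^ n x * (η ⟨_, hn y⟩ * S ^ n y) := by
        rw [map_mul, pow_add, mul_assoc (η ⟨_, hn x⟩), ← mul_assoc _ (S ^ n x), ← hb]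
        simp only [mul_assoc]
  · simp only [MonoidHom.coe_mk, OneHom.coe_mk, hρ y 0 (by simp), pow_zero, inv_one,
      mul_one]

end Extension

namespace Representation

variable {k G V : Type*} [CommSemiring k] [Monoid G] [AddCommMonoid V] [Module k V]

def twist (ρ : Representation k G V) (χ : G →* kˣ) : Representation k G V where
  toFun g := (χ g : k) • ρ g
  map_one' := by simp
  map_mul' g h := by simp only [map_mul, Units.val_mul, smul_mul_smul_comm]

theorem twist_apply (ρ : Representation k G V) (χ : G →* kˣ) (g : G) :
    ρ.twist χ g = (χ g : k) • ρ g :=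
  rfl

end Representation

section

variable {k G V : Type*} [Field k] [Group G] [AddCommGroup V] [Module k V] [Nontrivial V]

theorem Representation.smul_left_injective (τ : Representation k G V) (g : G) :
    Function.Injective fun c : k => c • τ g :=
  _root_.smul_left_injective k ((Group.isUnit g).map τ).ne_zero

theorem Representation.exists_eq_twist {ρ τ : Representation k G V}
    (h : ∀ g, ∃ c : k, ρ g = c • τ g) : ∃ χ : G →* kˣ, ρ = τ.twist χ := by
  choose c hc using h
  let χ : G →* k :=
    { toFun := c
      map_one' := τ.smul_left_injective 1 <| show c 1 • τ 1 = 1 • τ 1 by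
        rw [← hc, map_one, map_one, one_smul]
      map_mul' := fun g h => τ.smul_left_injective (g * h) <|
        show c (g * h) • τ (g * h) = (c g * c h) • τ (g * h) by
        rw [← hc, map_mul, map_mul, hc, hc, smul_mul_smul_comm] }
  exact ⟨χ.toHomUnits, MonoidHom.ext fun g => hc g⟩

end

namespace FDRep

section

variable {k G : Type*} [Field k] [Monoid G]

theorem nonempty_iso_iff {V W : FDRep k G} :
    Nonempty (V ≅ W) ↔ ∃ t : V ≃ₗ[k] W, ∀ g, t.toLinearMap ∘ₗ V.ρ g = W.ρ g ∘ₗ t.toLinearMap := by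
  constructor
  · rintro ⟨i⟩
    refine ⟨isoToLinearEquiv i, fun g => ?_⟩
    rw [Iso.conj_ρ i g, LinearEquiv.conj_apply]
    ext v
    simp
  · rintro ⟨t, ht⟩
    exact ⟨Action.mkIso t.toFGModuleCatIso fun g => FGModuleCat.hom_ext (ht g)⟩

theorem nontrivial_of_simple (η : FDRep k G) [Simple η] : Nontrivial η := by
  by_contra h
  rw [not_nontrivial_iff_subsingleton] at h
  exact id_nonzero η (Action.hom_ext _ _ (FGModuleCat.hom_ext (LinearMap.ext fun _ =>
    Subsingleton.elim _ _)))

theorem exists_eq_smul_one_of_commute [IsAlgClosed k] (η : FDRep k G) [Simple η]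
    (f : Module.End k η) (hf : ∀ g, Commute f (η.ρ g)) : ∃ c : k, f = c • 1 := by
  obtain ⟨c, hc⟩ := endomorphism_simple_eq_smul_id k (X := η)
    (⟨FGModuleCat.ofHom f, fun g => FGModuleCat.hom_ext (hf g).eq⟩ : η ⟶ η)
  exact ⟨c, congrArg (fun φ : η ⟶ η => φ.hom.hom.hom) hc.symm⟩

theorem simple_of_simple_res {H : Type*} [Monoid H] (f : H →* G) (σ : FDRep k G)
    [Simple ((Action.res (FGModuleCat k) f).obj σ)] : Simple σ :=
  have : (Action.res (FGModuleCat k) f ⋙ Action.forget (FGModuleCat k) H).PreservesMonomorphisms :=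
    inferInstanceAs (Action.forget (FGModuleCat k) G).PreservesMonomorphisms
  have : (Action.res (FGModuleCat k) f).PreservesMonomorphisms :=
    Functor.preservesMonomorphisms_of_preserves_of_reflects _ (Action.forget (FGModuleCat k) H)
  (Action.res (FGModuleCat k) f).simple_of_simple_obj σ

theorem res_ρ {H : Type*} [Monoid H] (f : H →* G) (σ : FDRep k G) (h : H) :
    FDRep.ρ ((Action.res (FGModuleCat k) f).obj σ) h = σ.ρ (f h) :=
  rfl

noncomputable def twist (τ : FDRep k G) (χ : G →* kˣ) : FDRep k G :=
  FDRep.of (Representation.twist τ.ρ χ)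

theorem twist_ρ (τ : FDRep k G) (χ : G →* kˣ) (g : G) : (τ.twist χ).ρ g = (χ g : k) • τ.ρ g :=
  rfl

end

section

variable {k G : Type*} [Field k] [Group G] {H : Subgroup G}

theorem res_twist_iso (τ : FDRep k G) {χ : G →* kˣ} (hχ : H ≤ χ.ker) :
    Nonempty ((Action.res (FGModuleCat k) H.subtype).obj (τ.twist χ) ≅
      (Action.res (FGModuleCat k) H.subtype).obj τ) :=
  nonempty_iso_iff.2 ⟨LinearEquiv.refl k _, fun h => by
    rw [res_ρ, res_ρ, twist_ρ, show χ (H.subtype h) = 1 from hχ h.2, Units.val_one, one_smul]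
    rfl⟩

theorem exists_iso_twist_of_res_iso [IsAlgClosed k] [H.Normal] {σ τ : FDRep k G}
    [Simple ((Action.res (FGModuleCat k) H.subtype).obj τ)]
    (e : (Action.res (FGModuleCat k) H.subtype).obj σ ≅
      (Action.res (FGModuleCat k) H.subtype).obj τ) :
    ∃ χ : G →* kˣ, H ≤ χ.ker ∧ Nonempty (σ ≅ τ.twist χ) := by
  have : Nontrivial τ := nontrivial_of_simple ((Action.res (FGModuleCat k) H.subtype).obj τ)
  obtain ⟨t, ht⟩ : ∃ t : σ ≃ₗ[k] τ, ∀ h : H, t.toLinearMap ∘ₗ σ.ρ h = τ.ρ h ∘ₗ t.toLinearMap :=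
    nonempty_iso_iff.1 ⟨e⟩
  let ρ : Representation k G τ := t.conjRingEquiv.toMonoidHom.comp σ.ρ
  have hρ : ∀ x v, ρ x v = t (σ.ρ x (t.symm v)) := fun _ _ => rfl
  have hρH : ∀ h ∈ H, ρ h = τ.ρ h := fun h hh => LinearMap.ext fun v => by
    simpa only [hρ, LinearMap.comp_apply, LinearEquiv.coe_coe, LinearEquiv.apply_symm_apply]
      using LinearMap.congr_fun (ht ⟨h, hh⟩) (t.symm v)
  obtain ⟨χ, hχ⟩ := Representation.exists_eq_twist (ρ := ρ) (τ := τ.ρ) fun x => by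
    obtain ⟨c, hc⟩ : ∃ c : k, τ.ρ x⁻¹ * ρ x = c • 1 := exists_eq_smul_one_of_commute
      ((Action.res (FGModuleCat k) H.subtype).obj τ) (τ.ρ x⁻¹ * ρ x)
      fun h => commute_map_inv_mul_map hρH x h.2
    refine ⟨c, ?_⟩
    rw [← mul_smul_one, ← hc, ← mul_assoc, ← map_mul, mul_inv_cancel, map_one, one_mul]
  refine ⟨χ, fun h hh => Units.ext (Representation.smul_left_injective τ.ρ h ?_),
    nonempty_iso_iff.2 ⟨t, ?_⟩⟩
  · show (χ h : k) • τ.ρ h = (1 : k) • τ.ρ h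
    rw [one_smul, ← Representation.twist_apply, ← hχ, hρH h hh]
  · intro x
    ext v
    change t (σ.ρ x v) = Representation.twist τ.ρ χ x (t v)
    rw [← hχ, hρ, t.symm_apply_apply]

theorem eq_of_twist_iso_twist [IsAlgClosed k] (τ : FDRep k G)
    [Simple ((Action.res (FGModuleCat k) H.subtype).obj τ)] {χ χ' : G →* kˣ}
    (hχ : H ≤ χ.ker) (hχ' : H ≤ χ'.ker) (e : τ.twist χ ≅ τ.twist χ') : χ = χ' := by
  have : Nontrivial τ := nontrivial_of_simple ((Action.res (FGModuleCat k) H.subtype).obj τ)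
  obtain ⟨u, hu⟩ : ∃ u : τ ≃ₗ[k] τ, ∀ x, u.toLinearMap ∘ₗ ((χ x : k) • τ.ρ x) =
      ((χ' x : k) • τ.ρ x) ∘ₗ u.toLinearMap :=
    nonempty_iso_iff.1 ⟨e⟩
  have hcomm : ∀ h : H, Commute u.toLinearMap (τ.ρ h) := fun h => by
    have := hu h
    rwa [show χ h = 1 from hχ h.2, show χ' h = 1 from hχ' h.2, Units.val_one, one_smul] at this
  obtain ⟨c, hc⟩ : ∃ c : k, u.toLinearMap = c • 1 :=
    exists_eq_smul_one_of_commute ((Action.res (FGModuleCat k) H.subtype).obj τ) _ hcomm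
  refine MonoidHom.ext fun x => Units.ext (Representation.smul_left_injective τ.ρ x ?_)
  have hscalar : ∀ f : Module.End k τ, f ∘ₗ u.toLinearMap = u.toLinearMap ∘ₗ f := fun f =>
    (hc ▸ ((Commute.one_right f).smul_right c)).eq
  refine LinearMap.ext fun v => u.injective ?_
  calc u (((χ x : k) • τ.ρ x) v) = (((χ' x : k) • τ.ρ x) ∘ₗ u.toLinearMap) v :=
        LinearMap.congr_fun (hu x) v
    _ = u (((χ' x : k) • τ.ρ x) v) := by rw [hscalar]; rfl

theorem card_extensions_eq_card_monoidHom_le_ker [IsAlgClosed k] [H.Normal] {η : FDRep k H}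
    [Simple η] (τ : FDRep k G) (e : (Action.res (FGModuleCat k) H.subtype).obj τ ≅ η) :
    Nat.card (Quot (fun ρ σ : {ρ : FDRep k G // Simple ρ ∧
        Nonempty ((Action.res (FGModuleCat k) H.subtype).obj ρ ≅ η)} =>
      Nonempty (ρ.1 ≅ σ.1))) = Nat.card {χ : G →* kˣ // H ≤ χ.ker} := by
  have : Simple ((Action.res (FGModuleCat k) H.subtype).obj τ) := Simple.of_iso e
  have hext : ∀ χ : {χ : G →* kˣ // H ≤ χ.ker}, Simple (τ.twist χ) ∧
      Nonempty ((Action.res (FGModuleCat k) H.subtype).obj (τ.twist χ) ≅ η) := fun χ => by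
    obtain ⟨i⟩ := res_twist_iso τ χ.2
    have := Simple.of_iso i
    exact ⟨simple_of_simple_res H.subtype _, ⟨i ≪≫ e⟩⟩
  refine (Nat.card_congr (Equiv.ofBijective (fun χ => Quot.mk _ ⟨τ.twist χ, hext χ⟩)
    ⟨fun χ χ' h => ?_, fun c => ?_⟩)).symm
  · obtain ⟨i⟩ := (Equivalence.eqvGen_iff ⟨fun _ => ⟨Iso.refl _⟩, fun ⟨i⟩ => ⟨i.symm⟩,
      fun ⟨i⟩ ⟨j⟩ => ⟨i ≪≫ j⟩⟩).1 (Quot.eqvGen_exact h)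
    exact Subtype.ext (eq_of_twist_iso_twist τ χ.2 χ'.2 i)
  · obtain ⟨⟨σ, -, ⟨i⟩⟩, rfl⟩ := Quot.exists_rep c
    obtain ⟨χ, hχ, ⟨j⟩⟩ := exists_iso_twist_of_res_iso (i ≪≫ e.symm)
    exact ⟨⟨χ, hχ⟩, Quot.sound ⟨j.symm⟩⟩

end

section

variable {k : Type*} [Field k] [IsAlgClosed k] {G : Type} [Group G] {H : Subgroup G}
  (hN : H.Normal)

theorem exists_intertwiner_pow_eq (η : FDRep k H) [Simple η] {g₀ : G}
    (hconj : Nonempty ((Action.res (FGModuleCat k) (conjIntoHom H hN g₀)).obj η ≅ η))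
    {n : ℕ} (hn : n ≠ 0) (hmem : g₀ ^ n ∈ H) :
    ∃ S : Module.End k η, (∀ y, S * η.ρ (conjIntoHom H hN g₀ y) = η.ρ y * S) ∧
      S ^ n = η.ρ ⟨g₀ ^ n, hmem⟩ := by
  have : Nontrivial η := nontrivial_of_simple η
  obtain ⟨a, ha⟩ : ∃ a : η ≃ₗ[k] η, ∀ y,
      a.toLinearMap ∘ₗ η.ρ (conjIntoHom H hN g₀ y) = η.ρ y ∘ₗ a.toLinearMap :=
    nonempty_iso_iff.1 hconj
  set A : Module.End k η := a.toLinearMap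
  have hA : ∀ y, A * η.ρ (conjIntoHom H hN g₀ y) = η.ρ y * A := ha
  let z : H := ⟨g₀ ^ n, hmem⟩
  obtain ⟨c, hc⟩ : ∃ c : k, A ^ n * η.ρ z⁻¹ = c • 1 :=
    exists_eq_smul_one_of_commute η _ fun y => by
      have hy : conjIntoHom H hN (g₀ ^ n) y = z⁻¹ * y * z := rfl
      calc A ^ n * η.ρ z⁻¹ * η.ρ y = A ^ n * η.ρ (conjIntoHom H hN (g₀ ^ n) y) * η.ρ z⁻¹ := by
            rw [hy, mul_assoc, mul_assoc, ← map_mul, ← map_mul]; group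
        _ = η.ρ y * (A ^ n * η.ρ z⁻¹) := by
            rw [pow_mul_map_conjIntoHom_pow hN hA, mul_assoc]
  have hAn : A ^ n = c • η.ρ z := by
    rw [← smul_one_mul, ← hc, mul_assoc, ← map_mul, inv_mul_cancel, map_one, mul_one]
  have hc0 : c ≠ 0 := by
    rintro rfl
    rw [zero_smul] at hAn
    exact (((Module.End.isUnit_iff A).2 a.bijective).pow n).ne_zero hAn
  obtain ⟨d, hd⟩ := IsAlgClosed.exists_pow_nat_eq c (Nat.pos_of_ne_zero hn)
  refine ⟨d⁻¹ • A, fun y => by rw [smul_mul_assoc, hA, mul_smul_comm], ?_⟩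
  rw [smul_pow, hAn, smul_smul, inv_pow, hd, inv_mul_cancel₀ hc0, one_smul]

theorem exists_res_iso_of_conj_iso (η : FDRep k H) [Simple η] {g₀ : G} {p : ℕ} (hp : p ≠ 0)
    (hord : ∀ j : ℕ, g₀ ^ j ∈ H ↔ p ∣ j) (hgen : ∀ x : G, ∃ n : ℕ, x * (g₀ ^ n)⁻¹ ∈ H)
    (hconj : Nonempty ((Action.res (FGModuleCat k) (conjIntoHom H hN g₀)).obj η ≅ η)) :
    ∃ τ : FDRep k G, Nonempty ((Action.res (FGModuleCat k) H.subtype).obj τ ≅ η) := by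
  obtain ⟨S, hS, hSp⟩ := exists_intertwiner_pow_eq hN η hconj hp ((hord p).2 dvd_rfl)
  obtain ⟨ρ, hρ⟩ := exists_monoidHom_extension hN hS hord hgen hSp
  refine ⟨FDRep.of ρ, nonempty_iso_iff.2 ⟨LinearEquiv.refl k η, fun y => ?_⟩⟩
  rw [res_ρ, of_ρ', H.subtype_apply, hρ]
  rfl

end

end FDRep

theorem stmt_5_general (G : Type) [Group G] (H : Subgroup G) (hN : H.Normal)
    (p : ℕ) (hp : p.Prime) (hidx : H.index = p)
    (η : FDRep ℂ ↥H) (hη : Simple η)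
    (hconj : ∀ g : G,
      Nonempty ((Action.res (FGModuleCat ℂ) (conjIntoHom H hN g)).obj η ≅ η)) :
    Nat.card (Quot (fun ρ σ : {ρ : FDRep ℂ G // Simple ρ ∧
        Nonempty ((Action.res (FGModuleCat ℂ) H.subtype).obj ρ ≅ η)} =>
      Nonempty (ρ.1 ≅ σ.1))) = p := by
  have := Fact.mk hp
  have hcard : Nat.card (G ⧸ H) = p := H.index_eq_card ▸ hidx
  have : Finite (G ⧸ H) := Nat.finite_of_card_ne_zero (hcard ▸ hp.ne_zero)
  have : IsCyclic (G ⧸ H) := isCyclic_of_prime_card hcard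
  obtain ⟨g₀, hord, hgen⟩ := H.exists_pow_mem_iff_dvd_of_index_eq_prime hidx
  obtain ⟨τ, ⟨e⟩⟩ := FDRep.exists_res_iso_of_conj_iso hN η hp.ne_zero hord hgen (hconj g₀)
  rw [FDRep.card_extensions_eq_card_monoidHom_le_ker τ e, H.card_monoidHom_le_ker, hcard]

theorem stmt_5 (G : Type) [Group G] [Fintype G] (H : Subgroup G) (hN : H.Normal)
    (p : ℕ) (hp : p.Prime) (hidx : H.index = p)
    (η : FDRep ℂ ↥H) (hη : Simple η)
    (hconj : ∀ g : G,
      Nonempty ((Action.res (FGModuleCat ℂ) (conjIntoHom H hN g)).obj η ≅ η)) :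
    Nat.card (Quot (fun ρ σ : {ρ : FDRep ℂ G // Simple ρ ∧
        Nonempty ((Action.res (FGModuleCat ℂ) H.subtype).obj ρ ≅ η)} =>
      Nonempty (ρ.1 ≅ σ.1))) = p :=
  stmt_5_general G H hN p hp hidx η hη hconj
end

section
/- Let G be a finite group, H a normal subgroup of G of index p, where p is prime, and let F be a field whose characteristic is zero or does not divide |G|. Let (η, W) be an irreducible F-representation of H such that for every g ∈ G the conjugate representation η^g is isomorphic to η. Then there exist an irreducible F-representation (ρ, V) of G and an integer m with 1 ≤ m ≤ p such that the restriction of ρ to H is isomorphic to the direct sum of m copies of η. -/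
/-!
Since `G` is finite, `η` embeds `H`-equivariantly into the representation of `G` on `G → W` by
right translation. Among the representations of `G` receiving a nonzero `H`-map from `η`, one of
minimal dimension is irreducible: a proper nonzero subrepresentation would receive the map itself,
or else the map would survive in the quotient. So there is an irreducible `ρ` of `G` and an
embedding `θ : η → ρ|_H`.

For `g ∈ G` the subspace `ρ(g) θ(W)` depends only on the coset `gH`, and it is the image of the
`H`-map `ρ(g) ∘ θ ∘ d_g`, where `d_g : η ≅ η^g`. The sum of these subspaces over coset
representatives is `G`-stable and nonzero, hence all of `ρ`. A sum of `[G : H]` images of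
embeddings of the simple `η` is the direct sum of at most `[G : H]` of them.
-/

open CategoryTheory

/-- The direct sum of `m` copies of a representation, realized on `Fin m → V`. -/
def repPow {F : Type} [Field F] {H V : Type} [Monoid H] [AddCommGroup V] [Module F V]
    (η : Representation F H V) (m : ℕ) : Representation F H (Fin m → V) where
  toFun h := LinearMap.compLeft (η h) (Fin m)
  map_one' := by ext v i; simp [LinearMap.compLeft]
  map_mul' a b := by ext v i; simp [LinearMap.compLeft]; try rfl

open Representation

namespace Subrepresentation

variable {F : Type*} [Field F] {G : Type*} [Monoid G] {V : Type*} [AddCommGroup V] [Module F V]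
  {ρ : Representation F G V}

@[simp] lemma toSubmodule_bot : (⊥ : Subrepresentation ρ).toSubmodule = ⊥ := rfl

@[simp] lemma mem_bot {v : V} : v ∈ (⊥ : Subrepresentation ρ) ↔ v = 0 := Submodule.mem_bot F

@[simp] lemma mem_top {v : V} : v ∈ (⊤ : Subrepresentation ρ) := Submodule.mem_top

instance [Nontrivial V] : Nontrivial (Subrepresentation ρ) := by
  obtain ⟨v, hv⟩ := exists_ne (0 : V)
  exact ⟨⊥, ⊤, fun h => hv (by simpa using congr(v ∈ $h))⟩

def subtype (U : Subrepresentation ρ) : IntertwiningMap U.toRepresentation ρ where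
  toLinearMap := U.toSubmodule.subtype
  isIntertwining' _ := rfl

def quotient (U : Subrepresentation ρ) : Representation F G (V ⧸ U.toSubmodule) :=
  ρ.quotient U.toSubmodule fun g _ hv => U.apply_mem_toSubmodule g hv

def mkQ (U : Subrepresentation ρ) : IntertwiningMap ρ U.quotient where
  toLinearMap := U.toSubmodule.mkQ
  isIntertwining' _ := rfl

end Subrepresentation

theorem Representation.IsIrreducible.nontrivial {F : Type*} [Field F] {G : Type*} [Monoid G]
    {V : Type*} [AddCommGroup V] [Module F V] {ρ : Representation F G V} [ρ.IsIrreducible] :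
    Nontrivial V :=
  IsSimpleModule.nontrivial (MonoidAlgebra F G) ρ.asModule

namespace FDRep

variable {F : Type} [Field F] {G : Type} [Monoid G]

def ofIntertwiningMap {V W : Type} [AddCommGroup V] [Module F V] [Module.Finite F V]
    [AddCommGroup W] [Module F W] [Module.Finite F W]
    {ρ : Representation F G V} {σ : Representation F G W} (f : IntertwiningMap ρ σ) :
    FDRep.of ρ ⟶ FDRep.of σ where
  hom := FGModuleCat.ofHom f.toLinearMap
  comm g := by ext x; exact f.isIntertwining _ _ g x

def toIntertwiningMap {X Y : FDRep F G} (f : X ⟶ Y) : IntertwiningMap X.ρ Y.ρ where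
  toLinearMap := f.hom.hom.hom
  isIntertwining' g := by ext x; exact congr($(f.comm g).hom.hom x)

noncomputable def equivOfIso {X Y : FDRep F G} (i : X ≅ Y) : Representation.Equiv X.ρ Y.ρ :=
  (toIntertwiningMap i.hom).ofBijective (ConcreteCategory.bijective_of_isIso i.hom)

noncomputable def isoOfEquiv {V W : Type} [AddCommGroup V] [Module F V] [Module.Finite F V]
    [AddCommGroup W] [Module F W] [Module.Finite F W]
    {ρ : Representation F G V} {σ : Representation F G W} (e : Representation.Equiv ρ σ) :
    FDRep.of ρ ≅ FDRep.of σ :=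
  have : IsIso (ofIntertwiningMap e.toIntertwiningMap) :=
    (ConcreteCategory.isIso_iff_bijective _).mpr e.toLinearEquiv.bijective
  asIso (ofIntertwiningMap e.toIntertwiningMap)

theorem simple_iff_isIrreducible (X : FDRep F G) : Simple X ↔ IsIrreducible X.ρ := by
  constructor
  · intro hX
    have : Nontrivial X := by
      by_contra h
      rw [not_nontrivial_iff_subsingleton] at h
      exact id_nonzero X (by ext x; exact Subsingleton.elim _ _)
    refine ⟨fun U => or_iff_not_imp_left.mpr fun hU => ?_⟩
    let i : FDRep.of U.toRepresentation ⟶ X := ofIntertwiningMap U.subtype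
    have : Mono i := ConcreteCategory.mono_of_injective _ Subtype.val_injective
    have hi : i ≠ 0 := by
      obtain ⟨x, hxU, hx⟩ := Submodule.exists_mem_ne_zero_of_ne_bot
        fun h => hU (Subrepresentation.toSubmodule_injective h)
      intro h
      exact hx congr($h ⟨x, hxU⟩)
    have := (hX.mono_isIso_iff_nonzero i).mpr hi
    refine Subrepresentation.toSubmodule_injective (eq_top_iff.mpr fun x _ => ?_)
    obtain ⟨y, rfl⟩ := (ConcreteCategory.bijective_of_isIso i).2 x
    exact y.2
  · intro hX
    have := hX.nontrivial
    refine ⟨fun {Y} f _ => ⟨fun _ hf => ?_, fun hf => ?_⟩⟩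
    · obtain ⟨x, hx⟩ := exists_ne (0 : X)
      subst hf
      exact hx (congr($(IsIso.inv_hom_id (0 : Y ⟶ X)) x).symm.trans rfl)
    · have hrange : (toIntertwiningMap f).range = ⊤ := by
        refine (eq_bot_or_eq_top _).resolve_left fun h => hf ?_
        ext y
        have : f y ∈ (toIntertwiningMap f).range := ⟨y, rfl⟩
        rwa [h, Subrepresentation.mem_bot] at this
      have : Epi f := ConcreteCategory.epi_of_surjective _ fun x => by
        have : x ∈ (toIntertwiningMap f).range := hrange ▸ Subrepresentation.mem_top
        exact this
      exact isIso_of_mono_of_epi f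

end FDRep

namespace Representation.IntertwiningMap

section Restriction

variable {F : Type*} [Field F] {G K : Type*} [Monoid G] [Monoid K] {V W : Type*}
  [AddCommGroup V] [Module F V] [AddCommGroup W] [Module F W]
  {ρ : Representation F G V} {σ : Representation F G W}

def res (φ : K →* G) (f : IntertwiningMap ρ σ) : IntertwiningMap (ρ.comp φ) (σ.comp φ) where
  toLinearMap := f.toLinearMap
  isIntertwining' k := f.isIntertwining' (φ k)

end Restriction

section RepPow

variable {F : Type} [Field F] {K : Type} [Monoid K] {W P : Type} [AddCommGroup W] [Module F W]
  [AddCommGroup P] [Module F P] {η : Representation F K W} {σ : Representation F K P}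

/-- `f ↦ β (f 0) + γ (Fin.tail f)`. -/
def consRepPow {m : ℕ} (β : IntertwiningMap η σ) (γ : IntertwiningMap (repPow η m) σ) :
    IntertwiningMap (repPow η (m + 1)) σ where
  toLinearMap := β.toLinearMap.coprod γ.toLinearMap ∘ₗ
    (Fin.consLinearEquiv F fun _ => W).symm.toLinearMap
  isIntertwining' k := by
    refine LinearMap.ext fun f => ?_
    change β (η k (f 0)) + γ (repPow η m k (Fin.tail f)) = σ k (β (f 0) + γ (Fin.tail f))
    rw [β.isIntertwining, γ.isIntertwining, map_add]

theorem range_consRepPow {m : ℕ} (β : IntertwiningMap η σ) (γ : IntertwiningMap (repPow η m) σ) :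
    LinearMap.range (β.consRepPow γ).toLinearMap =
      LinearMap.range β.toLinearMap ⊔ LinearMap.range γ.toLinearMap := by
  rw [consRepPow, LinearMap.range_comp_of_range_eq_top _ (LinearEquiv.range _),
    LinearMap.range_coprod]

theorem injective_consRepPow {m : ℕ} {β : IntertwiningMap η σ} {γ : IntertwiningMap (repPow η m) σ}
    (hβ : Function.Injective β) (hγ : Function.Injective γ)
    (hdisj : Disjoint (LinearMap.range β.toLinearMap) (LinearMap.range γ.toLinearMap)) :
    Function.Injective (β.consRepPow γ) := by
  have hker := LinearMap.ker_coprod_of_disjoint_range _ _ hdisj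
  rw [LinearMap.ker_eq_bot.mpr hβ, LinearMap.ker_eq_bot.mpr hγ, Submodule.prod_bot] at hker
  exact (LinearMap.ker_eq_bot.mp hker).comp (LinearEquiv.injective _)

end RepPow

section Subgroup

variable {F : Type} [Field F] {G : Type} [Group G] {H : Subgroup G}
  {W P : Type} [AddCommGroup W] [Module F W] [AddCommGroup P] [Module F P]
  {η : Representation F H W} {σ : Representation F G P}

theorem map_range_of_mem (θ : IntertwiningMap η (σ.comp H.subtype)) {h : G} (hh : h ∈ H) :
    (LinearMap.range θ.toLinearMap).map (σ h) = LinearMap.range θ.toLinearMap :=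
  calc (LinearMap.range θ.toLinearMap).map (σ h)
      = LinearMap.range (σ h ∘ₗ θ.toLinearMap) := (LinearMap.range_comp _ _).symm
    _ = LinearMap.range (θ.toLinearMap ∘ₗ η ⟨h, hh⟩) :=
      congrArg LinearMap.range (θ.isIntertwining' ⟨h, hh⟩).symm
    _ = LinearMap.range θ.toLinearMap := LinearMap.range_comp_of_range_eq_top _
      (LinearMap.range_eq_top.mpr (η.apply_bijective _).2)

theorem iSup_map_range_out_eq_top [IsIrreducible σ] (θ : IntertwiningMap η (σ.comp H.subtype))
    (hθ : θ ≠ 0) : ⨆ q : G ⧸ H, (LinearMap.range θ.toLinearMap).map (σ q.out) = ⊤ := by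
  set R : G → Submodule F P := fun g => (LinearMap.range θ.toLinearMap).map (σ g) with hR
  have hR_mul (x g : G) : (R g).map (σ x) = R (x * g) := by
    simp only [hR, map_mul, Module.End.mul_eq_comp, Submodule.map_comp]
  have hR_out (g : G) : R (g : G ⧸ H).out = R g := by
    obtain ⟨h, hh⟩ := QuotientGroup.mk_out_eq_mul H g
    rw [hh, ← hR_mul]
    exact congrArg (Submodule.map (σ g)) (θ.map_range_of_mem h.2)
  have hinv (x : G) : (⨆ q : G ⧸ H, R q.out).map (σ x) ≤ ⨆ q : G ⧸ H, R q.out := by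
    rw [Submodule.map_iSup]
    refine iSup_le fun q => ?_
    rw [hR_mul, ← hR_out]
    exact le_iSup (fun q : G ⧸ H => R q.out) _
  let T : Subrepresentation σ :=
    ⟨⨆ q : G ⧸ H, R q.out, fun x _ hv => hinv x (Submodule.mem_map_of_mem hv)⟩
  have hT : T ≠ ⊥ := by
    intro h
    have h1 : R 1 ≤ T.toSubmodule := hR_out 1 ▸ le_iSup (fun q : G ⧸ H => R q.out) _
    rw [h] at h1
    replace h1 : LinearMap.range θ.toLinearMap ≤ ⊥ := by
      simpa [hR, Module.End.one_eq_id] using h1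
    exact hθ (IntertwiningMap.ext (LinearMap.range_eq_bot.mp (le_bot_iff.mp h1)))
  exact congrArg Subrepresentation.toSubmodule ((eq_bot_or_eq_top T).resolve_left hT)

def translate (hN : H.Normal) (θ : IntertwiningMap η (σ.comp H.subtype)) (g : G)
    (d : IntertwiningMap η (η.comp (conjIntoHom H hN g))) :
    IntertwiningMap η (σ.comp H.subtype) where
  toLinearMap := σ g ∘ₗ θ.toLinearMap ∘ₗ d.toLinearMap
  isIntertwining' h := by
    refine LinearMap.ext fun w => ?_
    change σ g (θ (d (η h w))) = σ h (σ g (θ (d w)))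
    rw [d.isIntertwining, MonoidHom.comp_apply, θ.isIntertwining]
    change σ g (σ (g⁻¹ * h * g) _) = _
    rw [← Module.End.mul_apply, ← map_mul, ← Module.End.mul_apply, ← map_mul]
    group

theorem range_translate (hN : H.Normal) (θ : IntertwiningMap η (σ.comp H.subtype)) (g : G)
    (d : Equiv η (η.comp (conjIntoHom H hN g))) :
    LinearMap.range (θ.translate hN g d.toIntertwiningMap).toLinearMap =
      (LinearMap.range θ.toLinearMap).map (σ g) := by
  rw [translate, LinearMap.range_comp, LinearMap.range_comp_of_range_eq_top]
  exact LinearMap.range_eq_top.mpr d.toLinearEquiv.surjective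

end Subgroup

end Representation.IntertwiningMap

def Representation.rightTranslation (F G W : Type) [Field F] [Group G] [AddCommGroup W]
    [Module F W] : Representation F G (G → W) where
  toFun g := LinearMap.funLeft F W (· * g)
  map_one' := by ext f x; simp [LinearMap.funLeft]
  map_mul' a b := by ext f x; simp [LinearMap.funLeft, mul_assoc]

theorem exists_intertwiningMap_rightTranslation_ne_zero {F G W : Type} [Field F] [Group G]
    [AddCommGroup W] [Module F W] [Nontrivial W] {H : Subgroup G} (η : Representation F H W) :
    ∃ θ : IntertwiningMap η ((rightTranslation F G W).comp H.subtype), θ ≠ 0 := by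
  classical
  let θ : IntertwiningMap η ((rightTranslation F G W).comp H.subtype) :=
    ⟨LinearMap.pi fun x => if hx : x ∈ H then η ⟨x, hx⟩ else 0, fun h => by
      refine LinearMap.ext fun w => funext fun x => ?_
      by_cases hx : x ∈ H
      · have hxh : x * h ∈ H := H.mul_mem hx h.2
        simp only [LinearMap.coe_comp, Function.comp_apply, LinearMap.pi_apply, hx, hxh,
          ↓reduceDIte, rightTranslation, LinearMap.funLeft, MonoidHom.coe_comp, MonoidHom.coe_mk,
          OneHom.coe_mk, Subgroup.coe_subtype, LinearMap.coe_mk, AddHom.coe_mk,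
          ← Module.End.mul_apply, ← map_mul]
        rfl
      · have hxh : x * h ∉ H := fun hxh => hx ((H.mul_mem_cancel_right h.2).mp hxh)
        simp [rightTranslation, LinearMap.funLeft, hx, hxh]⟩
  obtain ⟨w, hw⟩ := exists_ne (0 : W)
  refine ⟨θ, fun h => hw ?_⟩
  simpa [θ, show (⟨1, H.one_mem⟩ : H) = 1 from rfl] using congr($h w 1)

theorem exists_isIrreducible_intertwiningMap_ne_zero {F : Type} [Field F] {G K : Type} [Monoid G]
    [Monoid K] (φ : K →* G) {W : Type} [AddCommGroup W] [Module F W] {τ : Representation F K W}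
    {V : Type} [AddCommGroup V] [Module F V] [FiniteDimensional F V] (σ : Representation F G V)
    (θ : IntertwiningMap τ (σ.comp φ)) (hθ : θ ≠ 0) :
    ∃ X : FDRep F G, IsIrreducible X.ρ ∧ ∃ θ' : IntertwiningMap τ (X.ρ.comp φ), θ' ≠ 0 := by
  induction hn : Module.finrank F V using Nat.strong_induction_on generalizing V with
  | _ n ih =>
  by_cases hirr : IsIrreducible σ
  · exact ⟨FDRep.of σ, hirr, θ, hθ⟩
  have : Nontrivial V := by
    obtain ⟨w, hw⟩ : ∃ w, θ w ≠ 0 := by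
      by_contra! h
      exact hθ (IntertwiningMap.ext (LinearMap.ext h))
    exact ⟨⟨_, 0, hw⟩⟩
  obtain ⟨U, hU_bot, hU_top⟩ : ∃ U : Subrepresentation σ, U ≠ ⊥ ∧ U ≠ ⊤ := by
    by_contra! h
    exact hirr ⟨fun U => or_iff_not_imp_left.mpr (h U)⟩
  by_cases hq : (U.mkQ.res φ).comp θ = 0
  · have hmem (w : W) : θ w ∈ U.toSubmodule :=
      (Submodule.Quotient.mk_eq_zero _).mp congr($hq w)
    have hlt : Module.finrank F U.toSubmodule < n :=
      hn ▸ Submodule.finrank_lt fun h => hU_top (Subrepresentation.toSubmodule_injective h)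
    refine ih _ hlt U.toRepresentation ⟨θ.toLinearMap.codRestrict _ hmem, fun k => ?_⟩ ?_ rfl
    · ext w
      exact θ.isIntertwining _ _ k w
    · intro h
      exact hθ (IntertwiningMap.ext (LinearMap.ext fun w => congr(($h w : V))))
  · have hpos : 0 < Module.finrank F U.toSubmodule := Module.finrank_pos_iff.mpr <|
      Submodule.nontrivial_iff_ne_bot.mpr fun h => hU_bot (Subrepresentation.toSubmodule_injective h)
    have := U.toSubmodule.finrank_quotient_add_finrank
    exact ih _ (by omega) U.quotient _ hq rfl

theorem exists_injective_intertwiningMap_repPow {F : Type} [Field F] {K : Type} [Monoid K]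
    {W P : Type} [AddCommGroup W] [Module F W] [AddCommGroup P] [Module F P]
    {η : Representation F K W} {σ : Representation F K P} [IsIrreducible η] {ι : Type*}
    (β : ι → IntertwiningMap η σ) (hβ : ∀ i, Function.Injective (β i)) (s : Finset ι) :
    ∃ m ≤ s.card, ∃ γ : IntertwiningMap (repPow η m) σ, Function.Injective γ ∧
      LinearMap.range γ.toLinearMap = ⨆ i ∈ s, LinearMap.range (β i).toLinearMap := by
  classical
  induction s using Finset.induction_on with
  | empty => exact ⟨0, le_rfl, 0, fun a b _ => Subsingleton.elim a b, by simp⟩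
  | insert a s ha ih =>
    obtain ⟨m, hm, γ, hγ, hrange⟩ := ih
    rw [Finset.iSup_insert, ← hrange, Finset.card_insert_of_notMem ha]
    -- the preimage of `range γ` under `β a` is `⊥` (a new summand) or `⊤` (nothing new)
    let U : Subrepresentation η :=
      ⟨(LinearMap.range γ.toLinearMap).comap (β a).toLinearMap, fun k w hw => by
        simpa [(β a).isIntertwining] using γ.range.apply_mem_toSubmodule k hw⟩
    rcases eq_bot_or_eq_top U with hU | hU
    · refine ⟨m + 1, by omega, (β a).consRepPow γ, ?_, IntertwiningMap.range_consRepPow _ _⟩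
      refine IntertwiningMap.injective_consRepPow (hβ a) hγ (Submodule.disjoint_def.mpr ?_)
      rintro _ ⟨w, rfl⟩ hw
      have : w ∈ U := hw
      rw [hU, Subrepresentation.mem_bot] at this
      simp [this]
    · refine ⟨m, by omega, γ, hγ, (sup_eq_right.mpr ?_).symm⟩
      rintro _ ⟨w, rfl⟩
      exact (hU ▸ Subrepresentation.mem_top : w ∈ U)

theorem exists_equiv_repPow_of_forall_equiv_conj {F : Type} [Field F] {G : Type} [Group G]
    {H : Subgroup G} [H.FiniteIndex] (hN : H.Normal) {W P : Type} [AddCommGroup W] [Module F W]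
    [AddCommGroup P] [Module F P] {η : Representation F H W} {σ : Representation F G P}
    [IsIrreducible η] [IsIrreducible σ]
    (hconj : ∀ g : G, Nonempty (Equiv η (η.comp (conjIntoHom H hN g))))
    (θ : IntertwiningMap η (σ.comp H.subtype)) (hθ : θ ≠ 0) :
    ∃ m, 1 ≤ m ∧ m ≤ H.index ∧ Nonempty (Equiv (repPow η m) (σ.comp H.subtype)) := by
  have : Fintype (G ⧸ H) := Fintype.ofFinite _
  let d (g : G) := (hconj g).some
  let β (q : G ⧸ H) := θ.translate hN q.out (d q.out).toIntertwiningMap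
  have hθ_inj : Function.Injective θ := (IsIrreducible.injective_or_eq_zero θ).resolve_right hθ
  have hβ_inj (q : G ⧸ H) : Function.Injective (β q) :=
    (σ.apply_bijective _).1.comp (hθ_inj.comp (d q.out).toLinearEquiv.injective)
  obtain ⟨m, hm, γ, hγ_inj, hγ_range⟩ :=
    exists_injective_intertwiningMap_repPow β hβ_inj Finset.univ
  simp only [Finset.mem_univ, iSup_pos, β, IntertwiningMap.range_translate,
    θ.iSup_map_range_out_eq_top hθ, LinearMap.range_eq_top] at hγ_range
  have hm_pos : 1 ≤ m := by
    have := IsIrreducible.nontrivial (ρ := σ)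
    by_contra! h
    obtain rfl : m = 0 := by omega
    obtain ⟨x, y, hxy⟩ := exists_pair_ne P
    obtain ⟨f, rfl⟩ := hγ_range x
    obtain ⟨g, rfl⟩ := hγ_range y
    exact hxy (congrArg γ (Subsingleton.elim f g))
  refine ⟨m, hm_pos, ?_, ⟨γ.ofBijective ⟨hγ_inj, hγ_range⟩⟩⟩
  rwa [Finset.card_univ, ← Nat.card_eq_fintype_card, ← Subgroup.index_eq_card] at hm

theorem stmt_7_general (F : Type) [Field F] (G : Type) [Group G] [Fintype G]
    (H : Subgroup G) (hN : H.Normal)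
    (p : ℕ) (hidx : H.index = p)
    (η : FDRep F ↥H) (hη : Simple η)
    (hconj : ∀ g : G,
      Nonempty ((Action.res (FGModuleCat F) (conjIntoHom H hN g)).obj η ≅ η)) :
    ∃ (ρ : FDRep F G) (m : ℕ), Simple ρ ∧ 1 ≤ m ∧ m ≤ p ∧
      Nonempty ((Action.res (FGModuleCat F) H.subtype).obj ρ ≅
        FDRep.of (repPow η.ρ m)) := by
  have : IsIrreducible η.ρ := (FDRep.simple_iff_isIrreducible η).mp hη
  have := IsIrreducible.nontrivial (ρ := η.ρ)
  obtain ⟨θ₀, hθ₀⟩ := exists_intertwiningMap_rightTranslation_ne_zero (G := G) η.ρ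
  obtain ⟨X, hX, θ, hθ⟩ := exists_isIrreducible_intertwiningMap_ne_zero H.subtype _ θ₀ hθ₀
  obtain ⟨m, hm, hmp, ⟨e⟩⟩ := exists_equiv_repPow_of_forall_equiv_conj hN
    (fun g => ⟨(FDRep.equivOfIso (hconj g).some).symm⟩) θ hθ
  exact ⟨X, m, (FDRep.simple_iff_isIrreducible X).mpr hX, hm, hidx ▸ hmp,
    ⟨(FDRep.isoOfEquiv e).symm⟩⟩

theorem stmt_7 (F : Type) [Field F] (G : Type) [Group G] [Fintype G]
    (hchar : ringChar F = 0 ∨ ¬ (ringChar F ∣ Fintype.card G))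
    (H : Subgroup G) (hN : H.Normal)
    (p : ℕ) (hp : p.Prime) (hidx : H.index = p)
    (η : FDRep F ↥H) (hη : Simple η)
    (hconj : ∀ g : G,
      Nonempty ((Action.res (FGModuleCat F) (conjIntoHom H hN g)).obj η ≅ η)) :
    ∃ (ρ : FDRep F G) (m : ℕ), Simple ρ ∧ 1 ≤ m ∧ m ≤ p ∧
      Nonempty ((Action.res (FGModuleCat F) H.subtype).obj ρ ≅
        FDRep.of (repPow η.ρ m)) :=
  stmt_7_general F G H hN p hidx η hη hconj
end

section
/- Let p be a prime, n ≥ 1, and F an algebraically closed field whose characteristic is zero or different from p. Let G be a cyclic group of order p^n with generator x, and set x_i = x^{p^{n−i}} for i = 1, …, n. For each ζ ∈ F with ζ^{p^n} = 1, set ζ_i = ζ^{p^{n−i}} and define e(ζ) = Π_{i=1}^{n} (1/p) Σ_{k=0}^{p−1} ζ_i^{−k} x_i^{k} ∈ F[G]. Then every e(ζ) is a primitive central idempotent of F[G], and every primitive central idempotent of F[G] equals e(ζ) for some ζ ∈ F with ζ^{p^n} = 1. -/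
/-! For ζ with ζ ^ N = 1, N = p ^ n, the product of the p-term geometric sums telescopes to
e(ζ) = N⁻¹ ∑_{m < N} (ζ⁻¹ x) ^ m, on which x acts as the scalar ζ. Since x generates G, F[G] · e(ζ)
is the line F · e(ζ), which forces e(ζ) to be primitive. Orthogonality of the N-th roots of
unity gives ∑_ζ e(ζ) = 1, so a primitive idempotent e' satisfies e' e(ζ) ≠ 0 for some ζ. In a
commutative ring a primitive idempotent f is split as a f + (1 - a) f by any idempotent a, so
a f ∈ {0, f}; applied to f = e' and to f = e(ζ) this gives e' = e' e(ζ) = e(ζ). -/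

/-- A primitive central idempotent of a ring: a nonzero central idempotent that cannot be
written as the sum of two nonzero orthogonal central idempotents. -/
def IsPrimitiveCentralIdempotent {A : Type} [Ring A] (e : A) : Prop :=
  e ≠ 0 ∧ e ∈ Set.center A ∧ e * e = e ∧
    ¬ ∃ e₁ e₂ : A, e₁ ≠ 0 ∧ e₂ ≠ 0 ∧ e₁ ∈ Set.center A ∧ e₂ ∈ Set.center A ∧
      e₁ * e₁ = e₁ ∧ e₂ * e₂ = e₂ ∧ e₁ * e₂ = 0 ∧ e₂ * e₁ = 0 ∧ e = e₁ + e₂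

open Finset MonoidAlgebra
open Polynomial (nthRootsFinset mem_nthRootsFinset mul_mem_nthRootsFinset)

section PrimitiveCentralIdempotent

variable {A : Type} [CommRing A]

theorem isPrimitiveCentralIdempotent_of_forall_mul_eq_smul {K : Type*} [Field K] [Algebra K A]
    {e : A} (hne : e ≠ 0) (hidem : e * e = e) (hmul : ∀ a : A, ∃ c : K, a * e = c • e) :
    IsPrimitiveCentralIdempotent e := by
  refine ⟨hne, Set.center_eq_univ A ▸ trivial, hidem, ?_⟩
  rintro ⟨e₁, e₂, he₁, he₂, -, -, hidem₁, -, horth, -, hsum⟩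
  obtain ⟨c, hc⟩ := hmul e₁
  replace hc : e₁ = c • e := by rw [← hc, hsum, mul_add, hidem₁, horth, add_zero]
  have hcc : IsIdempotentElem c := smul_left_injective K hne <| calc
    (c * c) • e = (c • e) * (c • e) := by rw [smul_mul_smul_comm, hidem]
    _ = c • e := by rw [← hc, hidem₁]
  rcases IsIdempotentElem.iff_eq_zero_or_one.mp hcc with rfl | rfl
  · exact he₁ (by rw [hc, zero_smul])
  · exact he₂ (by rw [one_smul] at hc; rwa [hc, left_eq_add] at hsum)

theorem IsPrimitiveCentralIdempotent.mul_eq_zero_or_eq {e a : A}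
    (he : IsPrimitiveCentralIdempotent e) (ha : a * a = a) : a * e = 0 ∨ a * e = e := by
  obtain ⟨-, -, hidem, hprim⟩ := he
  by_contra! h
  refine hprim ⟨a * e, (1 - a) * e, h.1, ?_, Set.center_eq_univ A ▸ trivial,
    Set.center_eq_univ A ▸ trivial, ?_, ?_, ?_, ?_, by ring⟩
  · rw [sub_mul, one_mul, sub_ne_zero]
    exact h.2.symm
  · linear_combination (e * e) * ha + a * hidem
  · linear_combination (e * e) * ha + (1 - a) * hidem
  all_goals linear_combination -(e * e) * ha

theorem IsPrimitiveCentralIdempotent.exists_eq_of_sum_eq_one {ι : Type*} {s : Finset ι}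
    {E : ι → A} (hE : ∀ i ∈ s, IsPrimitiveCentralIdempotent (E i)) (hsum : ∑ i ∈ s, E i = 1)
    {e : A} (he : IsPrimitiveCentralIdempotent e) : ∃ i ∈ s, e = E i := by
  obtain ⟨i, hi, hne⟩ : ∃ i ∈ s, e * E i ≠ 0 := by
    by_contra! h
    exact he.1 (by rw [← mul_one e, ← hsum, mul_sum, sum_eq_zero h])
  have hEe : E i * e = e :=
    (he.mul_eq_zero_or_eq (hE i hi).2.2.1).resolve_left (by rwa [mul_comm])
  have heE : e * E i = E i := ((hE i hi).mul_eq_zero_or_eq he.2.2.1).resolve_left hne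
  exact ⟨i, hi, by rw [← hEe, mul_comm, heE]⟩

end PrimitiveCentralIdempotent

theorem IsPrimitiveRoot.sum_nthRootsFinset_inv_pow {F : Type*} [Field F] {ω : F} {N m : ℕ}
    (hω : IsPrimitiveRoot ω N) (hm : m < N) :
    ∑ ζ ∈ nthRootsFinset N (1 : F), ζ⁻¹ ^ m = if m = 0 then (N : F) else 0 := by
  split_ifs with hm0
  · simp [hm0, hω.card_nthRootsFinset]
  have hN : 0 < N := by omega
  have hω0 : ω ≠ 0 := hω.ne_zero hN.ne'
  have hωS := hω.mem_nthRootsFinset hN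
  have hωS' := hω.inv.mem_nthRootsFinset hN
  have htrans : ∑ ζ ∈ nthRootsFinset N (1 : F), (ω * ζ)⁻¹ ^ m =
      ∑ ζ ∈ nthRootsFinset N (1 : F), ζ⁻¹ ^ m :=
    sum_nbij' (ω * ·) (ω⁻¹ * ·) (fun ζ hζ => by simpa using mul_mem_nthRootsFinset hωS hζ)
      (fun ζ hζ => by simpa using mul_mem_nthRootsFinset hωS' hζ)
      (fun ζ _ => by simp [hω0]) (fun ζ _ => by simp [hω0]) (fun _ _ => rfl)
  simp only [mul_inv, mul_pow, ← mul_sum] at htrans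
  by_contra hne
  exact hω.inv.pow_ne_one_of_pos_of_lt hm0 hm ((mul_eq_right₀ hne).mp htrans)

theorem geom_sum_range_mul {R : Type*} [CommSemiring R] (y : R) (a b : ℕ) :
    ∑ m ∈ range (a * b), y ^ m = (∑ i ∈ range a, y ^ i) * ∑ j ∈ range b, (y ^ a) ^ j := by
  induction b with
  | zero => simp
  | succ b ih =>
    rw [Nat.mul_succ, sum_range_add, ih, sum_range_succ, mul_add]
    congr 1
    rw [sum_mul]
    exact sum_congr rfl fun i _ => by rw [pow_add, pow_mul, mul_comm]

theorem prod_range_geom_sum_pow_pow {R : Type*} [CommSemiring R] (y : R) (p n : ℕ) :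
    ∏ j ∈ range n, ∑ k ∈ range p, (y ^ p ^ j) ^ k = ∑ m ∈ range (p ^ n), y ^ m := by
  induction n with
  | zero => simp
  | succ n ih => rw [prod_range_succ, ih, pow_succ, geom_sum_range_mul]

theorem prod_Icc_one_sub {M : Type*} [CommMonoid M] (f : ℕ → M) (n : ℕ) :
    ∏ i ∈ Icc 1 n, f (n - i) = ∏ j ∈ range n, f j :=
  prod_nbij' (n - ·) (n - ·) (fun i hi => by simp at hi ⊢; omega)
    (fun j hj => by simp at hj ⊢; omega) (fun i hi => by simp at hi; omega)
    (fun j hj => by simp at hj; omega) fun _ _ => rfl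

theorem mul_geom_sum_of_pow_eq_one {R : Type*} [CommRing R] {u : R} {N : ℕ} (h : u ^ N = 1) :
    u * ∑ m ∈ range N, u ^ m = ∑ m ∈ range N, u ^ m := by
  have := mul_geom_sum u N
  rwa [h, sub_self, sub_mul, one_mul, sub_eq_zero] at this

section EigenIdempotent

variable {F A : Type*} [Field F] [CommRing A] [Algebra F A]

/-- For `a ^ N = 1`, the projection onto the `ζ`-eigenspace of multiplication by `a`. -/
noncomputable def eigenIdempotent (N : ℕ) (a : A) (ζ : F) : A :=
  (N : F)⁻¹ • ∑ m ∈ range N, (ζ⁻¹ • a) ^ m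

variable {N : ℕ} {a : A} {ζ : F}

theorem mul_eigenIdempotent [NeZero N] (ha : a ^ N = 1) (hζ : ζ ^ N = 1) :
    a * eigenIdempotent N a ζ = ζ • eigenIdempotent N a ζ := by
  have hζ0 : ζ ≠ 0 := by rintro rfl; simp [zero_pow (NeZero.ne N)] at hζ
  have hu : (ζ⁻¹ • a) ^ N = 1 := by rw [smul_pow, ha, inv_pow, hζ, inv_one, one_smul]
  calc a * eigenIdempotent N a ζ = ζ • ((ζ⁻¹ • a) * eigenIdempotent N a ζ) := by
        rw [smul_mul_assoc, smul_smul, mul_inv_cancel₀ hζ0, one_smul]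
    _ = ζ • eigenIdempotent N a ζ := by
        rw [eigenIdempotent, mul_smul_comm, mul_geom_sum_of_pow_eq_one hu]

theorem pow_mul_eigenIdempotent [NeZero N] (ha : a ^ N = 1) (hζ : ζ ^ N = 1) (k : ℕ) :
    a ^ k * eigenIdempotent N a ζ = ζ ^ k • eigenIdempotent N a ζ := by
  induction k with
  | zero => simp
  | succ k ih =>
    rw [pow_succ', mul_assoc, ih, mul_smul_comm, mul_eigenIdempotent ha hζ, smul_smul, pow_succ]

theorem eigenIdempotent_mul_self [NeZero (N : F)] (ha : a ^ N = 1) (hζ : ζ ^ N = 1) :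
    eigenIdempotent N a ζ * eigenIdempotent N a ζ = eigenIdempotent N a ζ := by
  have : NeZero N := .of_neZero_natCast F
  have hζ0 : ζ ≠ 0 := by rintro rfl; simp [zero_pow (NeZero.ne N)] at hζ
  have hfix (m : ℕ) : (ζ⁻¹ • a) ^ m * eigenIdempotent N a ζ = eigenIdempotent N a ζ := by
    rw [smul_pow, smul_mul_assoc, pow_mul_eigenIdempotent ha hζ, smul_smul, ← mul_pow,
      inv_mul_cancel₀ hζ0, one_pow, one_smul]
  nth_rw 1 [eigenIdempotent]
  rw [smul_mul_assoc, sum_mul, sum_congr rfl fun m _ => hfix m, sum_const, card_range,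
    ← Nat.cast_smul_eq_nsmul F, smul_smul, inv_mul_cancel₀ (NeZero.ne _), one_smul]

theorem sum_eigenIdempotent [NeZero (N : F)] {ω : F} (hω : IsPrimitiveRoot ω N) :
    ∑ ζ ∈ nthRootsFinset N (1 : F), eigenIdempotent N a ζ = 1 := by
  have : NeZero N := .of_neZero_natCast F
  have hinner (m : ℕ) (hm : m ∈ range N) :
      ∑ ζ ∈ nthRootsFinset N (1 : F), (ζ⁻¹ • a) ^ m = if m = 0 then (N : F) • 1 else 0 := by
    simp_rw [smul_pow, ← sum_smul, hω.sum_nthRootsFinset_inv_pow (mem_range.mp hm)]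
    split_ifs with hm0 <;> simp [hm0]
  simp only [eigenIdempotent, ← smul_sum]
  rw [sum_comm, sum_congr rfl hinner, sum_ite_eq', if_pos (mem_range.2 (NeZero.pos N)),
    smul_smul, inv_mul_cancel₀ (NeZero.ne _), one_smul]

theorem prod_Icc_smul_geom_sum (p n : ℕ) (a : A) (ζ : F) :
    ∏ i ∈ Icc 1 n, (p : F)⁻¹ • ∑ k ∈ range p, ((ζ ^ p ^ (n - i))⁻¹) ^ k • (a ^ p ^ (n - i)) ^ k =
      eigenIdempotent (p ^ n) a ζ := by
  simp only [← smul_pow, ← inv_pow]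
  rw [← smul_prod, prod_Icc_one_sub (fun j => ∑ k ∈ range p, ((ζ⁻¹ • a) ^ p ^ j) ^ k),
    prod_range_geom_sum_pow_pow, Nat.card_Icc, Nat.add_sub_cancel, eigenIdempotent, Nat.cast_pow,
    inv_pow]

end EigenIdempotent

section GroupAlgebra

variable {F G : Type} [Field F] [CommGroup G] {N : ℕ} {x : G} {ζ : F}

theorem coeff_one_eigenIdempotent (hx : orderOf x = N) :
    (eigenIdempotent N (of F G x) ζ).coeff 1 = (N : F)⁻¹ := by
  classical
  have hcoeff (m : ℕ) (hm : m ∈ range N) :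
      ((ζ⁻¹ • of F G x) ^ m).coeff 1 = if m = 0 then 1 else 0 := by
    rw [smul_pow, ← map_pow, smul_of, coeff_single, Finsupp.single_apply]
    split_ifs with h1 hm0 hm0
    · simp [hm0]
    · exact absurd h1 (pow_ne_one_of_lt_orderOf hm0 (hx ▸ mem_range.mp hm))
    · simp [hm0] at h1
    · rfl
  rcases N.eq_zero_or_pos with rfl | hN
  · simp [eigenIdempotent]
  rw [eigenIdempotent, coeff_smul_apply, coeff_sum, Finsupp.finsetSum_apply,
    sum_congr rfl hcoeff, sum_ite_eq', if_pos (mem_range.2 hN), smul_eq_mul, mul_one]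

theorem eigenIdempotent_ne_zero [NeZero (N : F)] (hx : orderOf x = N) :
    eigenIdempotent N (of F G x) ζ ≠ 0 := fun h =>
  inv_ne_zero (NeZero.ne (N : F)) (by rw [← coeff_one_eigenIdempotent hx, h]; rfl)

theorem exists_mul_eigenIdempotent_eq_smul [NeZero (N : F)]
    (hgen : ∀ g : G, g ∈ Subgroup.zpowers x) (hx : x ^ N = 1) (hζ : ζ ^ N = 1)
    (a : MonoidAlgebra F G) : ∃ c : F, a * eigenIdempotent N (of F G x) ζ =
      c • eigenIdempotent N (of F G x) ζ := by
  have : NeZero N := .of_neZero_natCast F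
  induction a using MonoidAlgebra.induction_linear with
  | zero => exact ⟨0, by simp⟩
  | add a b ha hb =>
    obtain ⟨c, hc⟩ := ha
    obtain ⟨d, hd⟩ := hb
    exact ⟨c + d, by rw [add_mul, hc, hd, add_smul]⟩
  | single g b =>
    have hfin : IsOfFinOrder x := isOfFinOrder_iff_pow_eq_one.mpr ⟨N, NeZero.pos N, hx⟩
    obtain ⟨k, rfl⟩ : ∃ k : ℕ, x ^ k = g :=
      (Submonoid.mem_powers_iff g x).mp (hfin.mem_powers_iff_mem_zpowers.mpr (hgen g))
    have hxN : of F G x ^ N = 1 := by rw [← map_pow, hx, map_one]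
    exact ⟨b * ζ ^ k, by
      rw [← smul_of, map_pow, smul_mul_assoc, pow_mul_eigenIdempotent hxN hζ, smul_smul]⟩

theorem isPrimitiveCentralIdempotent_eigenIdempotent [NeZero (N : F)]
    (hgen : ∀ g : G, g ∈ Subgroup.zpowers x) (hx : orderOf x = N) (hζ : ζ ^ N = 1) :
    IsPrimitiveCentralIdempotent (eigenIdempotent N (of F G x) ζ) := by
  have hxN : x ^ N = 1 := hx ▸ pow_orderOf_eq_one x
  exact isPrimitiveCentralIdempotent_of_forall_mul_eq_smul (eigenIdempotent_ne_zero hx)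
    (eigenIdempotent_mul_self (by rw [← map_pow, hxN, map_one]) hζ)
    (exists_mul_eigenIdempotent_eq_smul hgen hxN hζ)

end GroupAlgebra

theorem Nat.Prime.cast_ne_zero_of_ringChar {F : Type*} [Field F] {p : ℕ} (hp : p.Prime)
    (hchar : ringChar F = 0 ∨ ringChar F ≠ p) : (p : F) ≠ 0 := fun h => by
  have hdvd := ringChar.dvd h
  rcases hchar with h0 | hne
  · exact hp.ne_zero (zero_dvd_iff.mp (h0 ▸ hdvd))
  · exact (hp.eq_one_or_self_of_dvd _ hdvd).elim CharP.ringChar_ne_one hne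

theorem stmt_15_general (p : ℕ) (hp : p.Prime) (n : ℕ)
    (F : Type) [Field F] [IsAlgClosed F]
    (hchar : ringChar F = 0 ∨ ringChar F ≠ p)
    (G : Type) [CommGroup G] [Fintype G] (hG : Fintype.card G = p ^ n)
    (x : G) (hx : ∀ g : G, g ∈ Subgroup.zpowers x)
    (e : F → MonoidAlgebra F G)
    (he : ∀ ζ : F, e ζ = ∏ i ∈ Finset.Icc 1 n,
      ((p : F)⁻¹ • ∑ k ∈ Finset.range p,
        ((ζ ^ p ^ (n - i))⁻¹) ^ k • MonoidAlgebra.of F G ((x ^ p ^ (n - i)) ^ k))) :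
    (∀ ζ : F, ζ ^ p ^ n = 1 → IsPrimitiveCentralIdempotent (e ζ)) ∧
      (∀ e' : MonoidAlgebra F G, IsPrimitiveCentralIdempotent e' →
        ∃ ζ : F, ζ ^ p ^ n = 1 ∧ e' = e ζ) := by
  have : NeZero ((p ^ n : ℕ) : F) :=
    ⟨by rw [Nat.cast_pow]; exact pow_ne_zero n (hp.cast_ne_zero_of_ringChar hchar)⟩
  have hord : orderOf x = p ^ n := by
    rw [orderOf_eq_card_of_forall_mem_zpowers hx, Nat.card_eq_fintype_card, hG]
  have he_eq (ζ : F) : e ζ = eigenIdempotent (p ^ n) (of F G x) ζ := by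
    simp only [he, map_pow, prod_Icc_smul_geom_sum]
  have hprim (ζ : F) (hζ : ζ ^ p ^ n = 1) : IsPrimitiveCentralIdempotent (e ζ) :=
    he_eq ζ ▸ isPrimitiveCentralIdempotent_eigenIdempotent hx hord hζ
  refine ⟨hprim, fun e' he' => ?_⟩
  obtain ⟨ω, hω⟩ := HasEnoughRootsOfUnity.exists_primitiveRoot F (p ^ n)
  have hsum : ∑ ζ ∈ nthRootsFinset (p ^ n) (1 : F), e ζ = 1 := by
    simp only [he_eq, sum_eigenIdempotent hω]
  have hpos : 0 < p ^ n := pow_pos hp.pos n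
  obtain ⟨ζ, hζ, rfl⟩ := he'.exists_eq_of_sum_eq_one
    (fun ζ hζ => hprim ζ ((mem_nthRootsFinset hpos 1).mp hζ)) hsum
  exact ⟨ζ, (mem_nthRootsFinset hpos 1).mp hζ, rfl⟩

theorem stmt_15 (p : ℕ) (hp : p.Prime) (n : ℕ) (hn : 1 ≤ n)
    (F : Type) [Field F] [IsAlgClosed F]
    (hchar : ringChar F = 0 ∨ ringChar F ≠ p)
    (G : Type) [CommGroup G] [Fintype G] (hG : Fintype.card G = p ^ n)
    (x : G) (hx : ∀ g : G, g ∈ Subgroup.zpowers x)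
    (e : F → MonoidAlgebra F G)
    (he : ∀ ζ : F, e ζ = ∏ i ∈ Finset.Icc 1 n,
      ((p : F)⁻¹ • ∑ k ∈ Finset.range p,
        ((ζ ^ p ^ (n - i))⁻¹) ^ k • MonoidAlgebra.of F G ((x ^ p ^ (n - i)) ^ k))) :
    (∀ ζ : F, ζ ^ p ^ n = 1 → IsPrimitiveCentralIdempotent (e ζ)) ∧
      (∀ e' : MonoidAlgebra F G, IsPrimitiveCentralIdempotent e' →
        ∃ ζ : F, ζ ^ p ^ n = 1 ∧ e' = e ζ) :=
  stmt_15_general p hp n F hchar G hG x hx e he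
end

section
/- Let p be a prime, G a finite abelian p-group, H a subgroup of G of index p, and x ∈ G \ H. Set e_H = (1/|H|) Σ_{h ∈ H} h ∈ ℚ[G] and e_x = (1/p)(1 + x + ⋯ + x^{p−1}) ∈ ℚ[G]. Then e_H · e_x and e_H · (1 − e_x) are primitive central idempotents of ℚ[G], and e_H = e_H e_x + e_H (1 − e_x). -/
/-- The idempotent `e_y = (1/p)(1 + y + y² + ⋯ + y^{p−1})` in the rational group
algebra `ℚ[G]`. -/
noncomputable def eElt (p : ℕ) {G : Type} [Group G] (y : G) : MonoidAlgebra ℚ G :=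
  (p : ℚ)⁻¹ • ∑ k ∈ Finset.range p, MonoidAlgebra.of ℚ G (y ^ k)

/-- The idempotent `e_H = (1/|H|) Σ_{h ∈ H} h` in the rational group algebra `ℚ[G]`. -/
noncomputable def eSub {G : Type} [Group G] (H : Subgroup G) [Fintype ↥H] :
    MonoidAlgebra ℚ G :=
  (Fintype.card ↥H : ℚ)⁻¹ • ∑ h : ↥H, MonoidAlgebra.of ℚ G ↑h


/-!
Since `H` has prime index and `x ∉ H`, every `g ∈ G` is `h * xⁿ` with `h ∈ H`. Hence
`u = e_H e_x`, which absorbs `H` and (as `x ^ p ∈ H`) also `x`, absorbs all of `G`: `u a = ε(a) u`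
for the augmentation `ε`. Likewise `f = e_H (1 - e_x)` absorbs `H`, so every element of `f ℚ[G]` is
`f P(x)` for a polynomial `P`. A character of `G ⧸ H` sending `x` to a primitive `p`-th root of
unity `ζ` gives `ψ : ℚ[G] → ℂ` with `ψ f = 1`, and `ψ (f P(x)) = P(ζ) = 0` forces `Φ_p ∣ P`, while
`f Φ_p(x) = p f e_x = 0`. So in both cases a ring homomorphism to a field sends the idempotent to
`1` and is injective on the ideal it generates; it then cannot send both of two orthogonal
idempotents to nonzero values, nor kill a nonzero one.
-/

open Polynomial Finset

theorem isPrimitiveCentralIdempotent_of_map_eq_one {A : Type} [CommRing A] {K F : Type*} [Ring K]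
    [NoZeroDivisors K] [Nontrivial K] [FunLike F A K] [RingHomClass F A K] (φ : F) {e : A}
    (he : e * e = e) (hφe : φ e = 1) (hker : ∀ a, φ (e * a) = 0 → e * a = 0) :
    IsPrimitiveCentralIdempotent e := by
  refine ⟨fun h => by simp [h] at hφe, Set.center_eq_univ A ▸ Set.mem_univ e, he, ?_⟩
  rintro ⟨e₁, e₂, h₁, h₂, -, -, he₁, he₂, h₁₂, h₂₁, rfl⟩
  have absorb₁ : (e₁ + e₂) * e₁ = e₁ := by rw [add_mul, he₁, h₂₁, add_zero]
  have absorb₂ : (e₁ + e₂) * e₂ = e₂ := by rw [add_mul, h₁₂, he₂, zero_add]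
  rcases mul_eq_zero.1 (show φ e₁ * φ e₂ = 0 by rw [← map_mul, h₁₂, map_zero]) with h | h
  · exact h₁ (absorb₁ ▸ hker e₁ (absorb₁.symm ▸ h))
  · exact h₂ (absorb₂ ▸ hker e₂ (absorb₂.symm ▸ h))

theorem mul_aeval_eq_zero_of_isPrimitiveRoot {A K : Type*} [Semiring A] [Algebra ℚ A] [Field K]
    [CharZero K] {n : ℕ} (hn : 0 < n) {μ : K} (hμ : IsPrimitiveRoot μ n) {f y : A}
    (hf : f * aeval y (cyclotomic n ℚ) = 0) {P : ℚ[X]} (hP : aeval μ P = 0) :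
    f * aeval y P = 0 := by
  obtain ⟨Q, rfl⟩ := cyclotomic_eq_minpoly_rat hμ hn ▸ minpoly.dvd ℚ μ hP
  rw [map_mul, ← mul_assoc, hf, zero_mul]

theorem MonoidAlgebra.mul_eq_lift_one_smul {k G : Type*} [CommSemiring k] [Monoid G]
    {v : MonoidAlgebra k G} (hv : ∀ g, v * of k G g = v) (a : MonoidAlgebra k G) :
    v * a = lift k k G 1 a • v := by
  induction a using MonoidAlgebra.induction_on with
  | of g => rw [hv, lift_of, MonoidHom.one_apply, one_smul]
  | add a b ha hb => rw [mul_add, ha, hb, map_add, add_smul]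
  | smul r a ha => rw [mul_smul_comm, ha, map_smul, smul_eq_mul, mul_smul]

section GroupAlgebra

variable {G : Type} [Group G] (H : Subgroup G) [Fintype H]

theorem eSub_mul_of_mem {h : G} (hh : h ∈ H) :
    eSub H * MonoidAlgebra.of ℚ G h = eSub H := by
  rw [eSub, smul_mul_assoc, Finset.sum_mul]
  congr 1
  exact Fintype.sum_equiv (Equiv.mulRight (⟨h, hh⟩ : H)) _ _ fun h' => (map_mul _ _ _).symm

theorem mul_eSub_of_forall_mem {a : MonoidAlgebra ℚ G}
    (ha : ∀ h ∈ H, a * MonoidAlgebra.of ℚ G h = a) : a * eSub H = a := by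
  rw [eSub, mul_smul_comm, Finset.mul_sum, Finset.sum_congr rfl fun (h : H) _ => ha h h.2,
    Finset.sum_const, Finset.card_univ, ← Nat.cast_smul_eq_nsmul ℚ, smul_smul,
    inv_mul_cancel₀ (Nat.cast_ne_zero.2 Fintype.card_ne_zero), one_smul]

theorem map_eSub {B : Type*} [Semiring B] [Algebra ℚ B] (φ : MonoidAlgebra ℚ G →ₐ[ℚ] B)
    (hφ : ∀ h ∈ H, φ (MonoidAlgebra.of ℚ G h) = 1) : φ (eSub H) = 1 := by
  simp only [eSub, map_smul, map_sum, hφ _ (Subtype.prop _), sum_const, card_univ]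
  rw [← Nat.cast_smul_eq_nsmul ℚ, smul_smul,
    inv_mul_cancel₀ (Nat.cast_ne_zero.2 Fintype.card_ne_zero), one_smul]

theorem eElt_eq_smul_sum_pow (p : ℕ) (y : G) :
    eElt p y = (p : ℚ)⁻¹ • ∑ k ∈ range p, MonoidAlgebra.of ℚ G y ^ k := by
  simp only [eElt, map_pow]

theorem map_eElt {B : Type*} [Semiring B] [Algebra ℚ B] (φ : MonoidAlgebra ℚ G →ₐ[ℚ] B)
    (p : ℕ) (y : G) :
    φ (eElt p y) = (p : ℚ)⁻¹ • ∑ k ∈ range p, φ (MonoidAlgebra.of ℚ G y) ^ k := by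
  simp only [eElt_eq_smul_sum_pow, map_smul, map_sum, map_pow]

theorem aeval_of_cyclotomic_prime {p : ℕ} [hp : Fact p.Prime] (y : G) :
    aeval (MonoidAlgebra.of ℚ G y) (cyclotomic p ℚ) = (p : ℚ) • eElt p y := by
  rw [eElt_eq_smul_sum_pow, smul_smul, mul_inv_cancel₀ (Nat.cast_ne_zero.2 hp.out.ne_zero),
    one_smul, cyclotomic_prime, map_sum]
  simp only [map_pow, aeval_X]

theorem eSub_mul_eElt_mul_of_self {p : ℕ} {x : G} (hxp : x ^ p ∈ H) :
    eSub H * eElt p x * MonoidAlgebra.of ℚ G x = eSub H * eElt p x := by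
  rw [← sub_eq_zero, ← mul_sub_one, eElt_eq_smul_sum_pow, mul_smul_comm, smul_mul_assoc,
    mul_assoc, geom_sum_mul, ← map_pow, mul_sub_one, eSub_mul_of_mem H hxp, sub_self, smul_zero]

end GroupAlgebra

section IndexPrime

variable {G : Type} [CommGroup G] {p : ℕ} {H : Subgroup G} {x : G}

theorem exists_mem_mul_pow_eq (hp : p.Prime) (hidx : H.index = p) (hx : x ∉ H) (g : G) :
    ∃ h ∈ H, ∃ n : ℕ, h * x ^ n = g := by
  have := Fact.mk hp
  obtain ⟨n, hn : (x : G ⧸ H) ^ n = g⟩ := mem_powers_of_prime_card (G := G ⧸ H) hidx (g' := g)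
    (mt (QuotientGroup.eq_one_iff x).1 hx)
  rw [← QuotientGroup.mk_pow, QuotientGroup.eq, mul_comm] at hn
  exact ⟨g * (x ^ n)⁻¹, hn, n, inv_mul_cancel_right g _⟩

theorem exists_monoidHom_of_index_eq_prime (hp : p.Prime) (hidx : H.index = p) (hx : x ∉ H)
    {M : Type*} [Group M] {μ : M} (hμ : μ ^ p = 1) :
    ∃ χ : G →* M, (∀ h ∈ H, χ h = 1) ∧ χ x = μ := by
  have := Fact.mk hp
  have hgen : ∀ y : G ⧸ H, y ∈ Subgroup.zpowers (x : G ⧸ H) := fun _ =>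
    mem_zpowers_of_prime_card hidx (mt (QuotientGroup.eq_one_iff x).1 hx)
  have hμx : orderOf μ ∣ orderOf (x : G ⧸ H) := by
    rw [orderOf_eq_card_of_forall_mem_zpowers hgen, ← Subgroup.index, hidx]
    exact orderOf_dvd_of_pow_eq_one hμ
  refine ⟨(monoidHomOfForallMemZpowers hgen hμx).comp (QuotientGroup.mk' H), fun h hh => ?_,
    monoidHomOfForallMemZpowers_apply_gen hgen hμx⟩
  rw [MonoidHom.comp_apply, QuotientGroup.mk'_apply, (QuotientGroup.eq_one_iff h).2 hh, map_one]

theorem exists_algHom_complex_of_index_eq_prime (hp : p.Prime) (hidx : H.index = p)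
    (hx : x ∉ H) : ∃ ψ : MonoidAlgebra ℚ G →ₐ[ℚ] ℂ, (∀ h ∈ H, ψ (MonoidAlgebra.of ℚ G h) = 1) ∧
      IsPrimitiveRoot (ψ (MonoidAlgebra.of ℚ G x)) p := by
  have hζ := Complex.isPrimitiveRoot_exp p hp.ne_zero
  obtain ⟨χ, hχH, hχx⟩ := exists_monoidHom_of_index_eq_prime hp hidx hx
    (μ := (hζ.isUnit hp.ne_zero).unit) (Units.ext (by simp [hζ.pow_eq_one]))
  refine ⟨MonoidAlgebra.lift ℚ ℂ G ((Units.coeHom ℂ).comp χ), fun h hh => ?_, ?_⟩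
  · simp [hχH h hh]
  · simpa [hχx] using hζ

theorem MonoidAlgebra.mul_of_eq_self_of_index_eq_prime (hp : p.Prime) (hidx : H.index = p)
    (hx : x ∉ H) {k : Type*} [Semiring k] {a : MonoidAlgebra k G}
    (hH : ∀ h ∈ H, a * of k G h = a) (hxa : a * of k G x = a) (g : G) : a * of k G g = a := by
  obtain ⟨h, hh, n, rfl⟩ := exists_mem_mul_pow_eq hp hidx hx g
  rw [map_mul, map_pow, ← mul_assoc, hH h hh]
  induction n with
  | zero => rw [pow_zero, mul_one]
  | succ n ih => rw [pow_succ, ← mul_assoc, ih, hxa]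

theorem MonoidAlgebra.exists_mul_eq_mul_aeval_of (hp : p.Prime) (hidx : H.index = p)
    (hx : x ∉ H) {k : Type*} [CommSemiring k] {a : MonoidAlgebra k G}
    (hH : ∀ h ∈ H, a * of k G h = a) (b : MonoidAlgebra k G) :
    ∃ P : k[X], a * b = a * aeval (of k G x) P := by
  induction b using MonoidAlgebra.induction_on with
  | of g =>
    obtain ⟨h, hh, n, rfl⟩ := exists_mem_mul_pow_eq hp hidx hx g
    exact ⟨X ^ n, by rw [map_mul, ← mul_assoc, hH h hh, map_pow, aeval_X_pow]⟩
  | add b c hb hc =>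
    obtain ⟨⟨P, hP⟩, ⟨Q, hQ⟩⟩ := And.intro hb hc
    exact ⟨P + Q, by rw [mul_add, hP, hQ, map_add, mul_add]⟩
  | smul r b hb =>
    obtain ⟨P, hP⟩ := hb
    exact ⟨r • P, by rw [mul_smul_comm, hP, map_smul, mul_smul_comm]⟩

variable [Fintype H]

theorem eSub_mul_eElt_mul (hp : p.Prime) (hidx : H.index = p) (hx : x ∉ H)
    (a : MonoidAlgebra ℚ G) :
    eSub H * eElt p x * a = MonoidAlgebra.lift ℚ ℚ G 1 a • (eSub H * eElt p x) :=
  MonoidAlgebra.mul_eq_lift_one_smul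
    (MonoidAlgebra.mul_of_eq_self_of_index_eq_prime hp hidx hx
      (fun h hh => by rw [mul_right_comm, eSub_mul_of_mem H hh])
      (eSub_mul_eElt_mul_of_self H (hidx ▸ H.pow_index_mem x))) a

theorem lift_one_eSub_mul_eElt (hp : p ≠ 0) :
    MonoidAlgebra.lift ℚ ℚ G 1 (eSub H * eElt p x) = 1 := by
  rw [map_mul, map_eSub H _ fun h _ => MonoidAlgebra.lift_of 1 h, map_eElt,
    MonoidAlgebra.lift_of]
  simp [hp]

theorem isPrimitiveCentralIdempotent_eSub_mul_eElt (hp : p.Prime) (hidx : H.index = p)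
    (hx : x ∉ H) : IsPrimitiveCentralIdempotent (eSub H * eElt p x) := by
  have hε := lift_one_eSub_mul_eElt (H := H) (x := x) hp.ne_zero
  refine isPrimitiveCentralIdempotent_of_map_eq_one (MonoidAlgebra.lift ℚ ℚ G 1)
    (by rw [eSub_mul_eElt_mul hp hidx hx, hε, one_smul]) hε fun a ha => ?_
  rw [map_mul, hε, one_mul] at ha
  rw [eSub_mul_eElt_mul hp hidx hx, ha, zero_smul]

theorem isPrimitiveCentralIdempotent_eSub_mul_one_sub_eElt (hp : p.Prime) (hidx : H.index = p)
    (hx : x ∉ H) : IsPrimitiveCentralIdempotent (eSub H * (1 - eElt p x)) := by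
  have := Fact.mk hp
  set f := eSub H * (1 - eElt p x) with hf
  have hfH : ∀ h ∈ H, f * MonoidAlgebra.of ℚ G h = f := fun h hh => by
    rw [mul_right_comm, eSub_mul_of_mem H hh]
  have hf_eElt : f * eElt p x = 0 := by
    rw [hf, mul_one_sub, sub_mul, eSub_mul_eElt_mul hp hidx hx, map_eElt, MonoidAlgebra.lift_of]
    simp [hp.ne_zero]
  have hf_idem : f * f = f := by
    rw [← mul_assoc, mul_eSub_of_forall_mem H hfH, mul_one_sub, hf_eElt, sub_zero]
  obtain ⟨ψ, hψH, hζ⟩ := exists_algHom_complex_of_index_eq_prime hp hidx hx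
  have hψf : ψ f = 1 := by
    rw [map_mul, map_sub, map_one, map_eSub H ψ hψH, map_eElt, hζ.geom_sum_eq_zero hp.one_lt,
      smul_zero, sub_zero, mul_one]
  refine isPrimitiveCentralIdempotent_of_map_eq_one ψ hf_idem hψf fun a ha => ?_
  obtain ⟨P, hP⟩ := MonoidAlgebra.exists_mul_eq_mul_aeval_of hp hidx hx hfH a
  rw [hP, map_mul, hψf, one_mul, ← aeval_algHom_apply] at ha
  rw [hP]
  refine mul_aeval_eq_zero_of_isPrimitiveRoot hp.pos hζ ?_ ha
  rw [aeval_of_cyclotomic_prime, mul_smul_comm, hf_eElt, smul_zero]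

end IndexPrime

theorem stmt_17_general (p : ℕ) (hp : p.Prime) (G : Type) [CommGroup G]
    (H : Subgroup G) [Fintype ↥H] (hidx : H.index = p)
    (x : G) (hx : x ∉ H) :
    IsPrimitiveCentralIdempotent (eSub H * eElt p x) ∧
      IsPrimitiveCentralIdempotent (eSub H * (1 - eElt p x)) ∧
      eSub H = eSub H * eElt p x + eSub H * (1 - eElt p x) :=
  ⟨isPrimitiveCentralIdempotent_eSub_mul_eElt hp hidx hx,
    isPrimitiveCentralIdempotent_eSub_mul_one_sub_eElt hp hidx hx,
    by rw [← mul_add, add_sub_cancel, mul_one]⟩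

theorem stmt_17 (p : ℕ) (hp : p.Prime) (G : Type) [CommGroup G] [Fintype G]
    (hG : IsPGroup p G)
    (H : Subgroup G) [Fintype ↥H] (hidx : H.index = p)
    (x : G) (hx : x ∉ H) :
    IsPrimitiveCentralIdempotent (eSub H * eElt p x) ∧
      IsPrimitiveCentralIdempotent (eSub H * (1 - eElt p x)) ∧
      eSub H = eSub H * eElt p x + eSub H * (1 - eElt p x) :=
  stmt_17_general p hp G H hidx x hx
end
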